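/- arXiv:1305.7319 — 6 statements merged into one kernel-verified Lean document; each statement's English description precedes it below -/
import Mathlib

section
/- Let p = Σ_{J ⊆ [n]} p_J x^J be a square-free polynomial in n variables with p(0) = 0, let p_max be its maximum over the hypercube [0,1]^n, and let t be an integer with deg(p) ≤ t ≤ n. For J ⊆ [n] set λ_J = (C(n−1,t−1) − C(n−|J|,t−|J|))/C(n−1,t−1), where C(a,b) denotes the binomial coefficient. Then the Handelman bound of order t satisfies p_han^{(t)} ≤ (n/t)·p_max + Σ_{J ⊆ [n], |J| ≥ 2, p_J > 0} p_J λ_J. In particular, if p_J ≤ 0 for all J with |J| ≥ 2, then p_han^{(t)} ≤ (n/t)·p_max. -/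
open MvPolynomial Finset

noncomputable def handTerm {V : Type*} [DecidableEq V] (T I : Finset V) : MvPolynomial V ℝ :=
  (∏ i ∈ I, X i) * ∏ j ∈ T \ I, (1 - X j)

def InHandelman {V : Type*} [Fintype V] [DecidableEq V] (t : ℕ)
    (p : MvPolynomial V ℝ) : Prop :=
  ∃ c : Finset V → Finset V → ℝ,
    (∀ T I, 0 ≤ c T I) ∧
    p = ∑ T ∈ Finset.univ.filter (fun T : Finset V => T.card ≤ t),
          ∑ I ∈ T.powerset, C (c T I) * handTerm T I

/-- The multilinear exponent vector of a subset `J ⊆ [n]`, so that `x^J` has exponents `monOf J`. -/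
noncomputable def monOf {n : ℕ} (J : Finset (Fin n)) : Fin n →₀ ℕ :=
  ∑ i ∈ J, Finsupp.single i 1

/-!
For each `t`-subset `T`, multilinear interpolation on the face `[0,1]^T` writes
`p_max - Σ_{J ⊆ T} p_J x^J` as `Σ_{I ⊆ T} (p_max - p(1_I)) x^I (1 - x)^{T \ I}`, whose
coefficients are nonnegative because `p(1_I) ≤ p_max`. Averaging these identities over the
`C(n, t)` faces with weight `1 / C(n-1, t-1)` gives `(n/t) p_max - Σ_J (1 - λ_J) p_J x^J`, so
`(n/t) p_max - p` is this Handelman polynomial plus `-Σ_J λ_J p_J x^J`, where `λ_J ≥ 0` and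
`λ_J = 0` for `|J| = 1`. A term `-λ_J p_J x^J` with `p_J ≤ 0` is a nonnegative multiple of `x^J`;
for `p_J > 0`, adding the constant `λ_J p_J` turns it into `λ_J p_J (1 - x^J)`, and
`1 - x^J = Σ_{I ⊊ J} x^I (1 - x)^{J \ I}`.
-/

section HandelmanTerms

variable {V : Type*} [DecidableEq V]

theorem handTerm_self (T : Finset V) : handTerm T T = ∏ i ∈ T, X i := by
  simp [handTerm]

theorem sum_handTerm_of_subset {J T : Finset V} (hJT : J ⊆ T) :
    ∑ I ∈ T.powerset with J ⊆ I, handTerm T I = ∏ i ∈ J, X i := by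
  -- expand `∏_{i ∈ T} (X i + g i)` where `g` vanishes on `J` and is `1 - X i` off `J`
  have h := Finset.prod_add (fun i => (X i : MvPolynomial V ℝ))
    (fun i => if i ∈ J then 0 else 1 - X i) T
  have hlhs : ∏ i ∈ T, (X i + if i ∈ J then 0 else 1 - X i) = ∏ i ∈ J, (X i : MvPolynomial V ℝ) := by
    rw [← prod_filter_mul_prod_filter_not T (· ∈ J), filter_mem_eq_inter, inter_eq_right.2 hJT]
    simp +contextual [prod_eq_one]
  have hrhs : ∀ I ∈ T.powerset, (∏ i ∈ I, X i) * ∏ i ∈ T \ I, (if i ∈ J then 0 else 1 - X i)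
      = if J ⊆ I then handTerm T I else 0 := by
    intro I hI
    split_ifs with hJI
    · refine congrArg _ (prod_congr rfl fun i hi => ?_)
      rw [if_neg fun hiJ => (mem_sdiff.1 hi).2 (hJI hiJ)]
    · obtain ⟨i, hiJ, hiI⟩ := not_subset.1 hJI
      rw [Finset.prod_eq_zero (mem_sdiff.2 ⟨hJT hiJ, hiI⟩) (by rw [if_pos hiJ]), mul_zero]
  rw [sum_filter, ← hlhs, h, sum_congr rfl hrhs]

theorem sum_handTerm (T : Finset V) : ∑ I ∈ T.powerset, handTerm T I = 1 := by
  simpa using sum_handTerm_of_subset (Finset.empty_subset T)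

theorem sum_C_mul_handTerm (c : Finset V → ℝ) (T : Finset V) :
    ∑ I ∈ T.powerset, C (∑ J ∈ I.powerset, c J) * handTerm T I
      = ∑ J ∈ T.powerset, C (c J) * ∏ i ∈ J, X i := by
  simp only [map_sum, sum_mul]
  rw [sum_comm' (t' := T.powerset) (s' := fun J => {I ∈ T.powerset | J ⊆ I})
    (fun I J => by simp only [mem_powerset, mem_filter]; grind)]
  refine sum_congr rfl fun J hJ => ?_
  rw [← mul_sum, sum_handTerm_of_subset (mem_powerset.1 hJ)]

theorem eval_handTerm_nonneg {x : V → ℝ} (hx : ∀ i, x i ∈ Set.Icc (0 : ℝ) 1) (T I : Finset V) :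
    0 ≤ eval x (handTerm T I) := by
  simp only [handTerm, map_mul, map_prod, map_sub, map_one, eval_X]
  exact mul_nonneg (prod_nonneg fun i _ => (hx i).1) (prod_nonneg fun i _ => sub_nonneg.2 (hx i).2)

end HandelmanTerms

namespace InHandelman

variable {V : Type*} [Fintype V] [DecidableEq V] {t : ℕ} {p q : MvPolynomial V ℝ}

theorem zero : InHandelman t (0 : MvPolynomial V ℝ) :=
  ⟨0, fun _ _ => le_rfl, by simp⟩

theorem add (hp : InHandelman t p) (hq : InHandelman t q) : InHandelman t (p + q) := by
  obtain ⟨c, hc, rfl⟩ := hp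
  obtain ⟨d, hd, rfl⟩ := hq
  exact ⟨c + d, fun T I => add_nonneg (hc T I) (hd T I), by
    simp only [Pi.add_apply, map_add, add_mul, sum_add_distrib]⟩

theorem C_mul {a : ℝ} (ha : 0 ≤ a) (hp : InHandelman t p) : InHandelman t (C a * p) := by
  obtain ⟨c, hc, rfl⟩ := hp
  exact ⟨a • c, fun T I => mul_nonneg ha (hc T I), by
    simp only [mul_sum, Pi.smul_apply, smul_eq_mul, map_mul, mul_assoc]⟩

theorem sum {ι : Type*} {s : Finset ι} {f : ι → MvPolynomial V ℝ}
    (h : ∀ i ∈ s, InHandelman t (f i)) : InHandelman t (∑ i ∈ s, f i) :=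
  Finset.sum_induction f _ (fun _ _ => add) zero h

theorem eval_nonneg (hp : InHandelman t p) {x : V → ℝ} (hx : ∀ i, x i ∈ Set.Icc (0 : ℝ) 1) :
    0 ≤ eval x p := by
  obtain ⟨c, hc, rfl⟩ := hp
  simp only [map_sum, map_mul, eval_C]
  exact sum_nonneg fun T _ => sum_nonneg fun I _ =>
    mul_nonneg (hc T I) (eval_handTerm_nonneg hx T I)

end InHandelman

section Generators

variable {V : Type*} [Fintype V] [DecidableEq V] {t : ℕ}

theorem inHandelman_handTerm {T I : Finset V} (hT : #T ≤ t) (hI : I ⊆ T) :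
    InHandelman t (handTerm T I) := by
  refine ⟨fun T' I' => if T' = T ∧ I' = I then 1 else 0, fun _ _ => by positivity, ?_⟩
  rw [sum_eq_single_of_mem T (by simp [hT]) (fun T' _ hT' => sum_eq_zero fun I' _ => by simp [hT']),
      sum_eq_single_of_mem I (mem_powerset.2 hI) (fun I' _ hI' => by simp [hI'])]
  simp

theorem inHandelman_prod_X {J : Finset V} (hJ : #J ≤ t) : InHandelman t (∏ i ∈ J, X i) :=
  handTerm_self J ▸ inHandelman_handTerm hJ subset_rfl

theorem inHandelman_one_sub_prod_X {J : Finset V} (hJ : #J ≤ t) :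
    InHandelman t (1 - ∏ i ∈ J, X i) := by
  rw [← sum_handTerm J, ← handTerm_self J, ← sum_erase_add _ _ (mem_powerset_self J),
    add_sub_cancel_right]
  exact InHandelman.sum fun I hI => inHandelman_handTerm hJ (mem_powerset.1 (mem_of_mem_erase hI))

end Generators

section SquareFree

variable {n : ℕ}

theorem monOf_apply (J : Finset (Fin n)) (i : Fin n) : monOf J i = if i ∈ J then 1 else 0 := by
  simp [monOf, Finsupp.finsetSum_apply, Finsupp.single_apply]

@[simp]
theorem monOf_empty : monOf (∅ : Finset (Fin n)) = 0 := by
  simp [monOf]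

theorem monOf_support (J : Finset (Fin n)) : (monOf J).support = J := by
  ext i
  simp [monOf_apply]

theorem monOf_injective : Function.Injective (monOf (n := n)) := fun a b h => by
  rw [← monOf_support a, h, monOf_support]

theorem monOf_support_of_le_one {m : Fin n →₀ ℕ} (hm : ∀ i, m i ≤ 1) : monOf m.support = m := by
  ext i
  have := hm i
  simp only [monOf_apply, Finsupp.mem_support_iff]
  split_ifs <;> omega

theorem degree_monOf (J : Finset (Fin n)) : (monOf J).degree = #J := by
  simp [monOf, map_sum]

theorem monomial_monOf (J : Finset (Fin n)) (a : ℝ) :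
    monomial (monOf J) a = C a * ∏ i ∈ J, X i := by
  calc monomial (monOf J) a = C a * monomial (monOf J) 1 := by rw [C_mul_monomial, mul_one]
    _ = C a * ∏ i ∈ J, X i := by simp only [monOf, monomial_sum_one, X]

theorem coeff_monOf_eq_zero_of_totalDegree_lt {p : MvPolynomial (Fin n) ℝ} {J : Finset (Fin n)}
    (h : p.totalDegree < #J) : p.coeff (monOf J) = 0 := by
  by_contra hJ
  have := le_totalDegree (mem_support_iff.2 hJ)
  change (monOf J).degree ≤ _ at this
  rw [degree_monOf] at this
  omega

variable {p : MvPolynomial (Fin n) ℝ}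

theorem eq_sum_C_mul_prod_X (hsf : ∀ m ∈ p.support, ∀ i, m i ≤ 1) :
    p = ∑ J, C (p.coeff (monOf J)) * ∏ i ∈ J, X i := by
  have hsupp : p.support ⊆ univ.image monOf := fun m hm =>
    mem_image.2 ⟨m.support, mem_univ _, monOf_support_of_le_one (hsf m hm)⟩
  conv_lhs => rw [← support_sum_monomial_coeff p,
    sum_subset hsupp fun m _ hm => by rw [notMem_support_iff.1 hm, monomial_zero],
    sum_image monOf_injective.injOn]
  simp only [monomial_monOf]

theorem eval_indicator_eq_sum_coeff (hsf : ∀ m ∈ p.support, ∀ i, m i ≤ 1) (I : Finset (Fin n)) :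
    eval (fun i => if i ∈ I then 1 else 0) p = ∑ J ∈ I.powerset, p.coeff (monOf J) := by
  conv_lhs => rw [eq_sum_C_mul_prod_X hsf]
  simp only [map_sum, map_mul, eval_C, map_prod, eval_X, prod_boole, mul_ite, mul_one, mul_zero]
  rw [← sum_filter]
  congr 1
  ext J
  simp [subset_iff]

end SquareFree

theorem card_filter_card_eq_and_subset {V : Type*} [Fintype V] [DecidableEq V] {t : ℕ}
    {J : Finset V} (hJ : #J ≤ t) :
    #{T : Finset V | #T = t ∧ J ⊆ T} = (Fintype.card V - #J).choose (t - #J) := by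
  rw [← card_compl, ← card_powersetCard]
  refine card_nbij' (· \ J) (· ∪ J) ?_ ?_ ?_ ?_
  · intro T hT
    simp only [coe_filter, mem_univ, true_and, Set.mem_ofPred_eq] at hT
    simp [mem_powersetCard, card_sdiff_of_subset hT.2, hT.1, subset_iff]
  · intro S hS
    simp only [mem_coe, mem_powersetCard, subset_compl_iff_disjoint_right] at hS
    simp [card_union_of_disjoint hS.1, hS.2, hJ]
  · intro T hT
    simp only [coe_filter, mem_univ, true_and, Set.mem_ofPred_eq] at hT
    exact sdiff_union_of_subset hT.2
  · intro S hS
    simp only [mem_coe, mem_powersetCard, subset_compl_iff_disjoint_right] at hS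
    exact union_sdiff_cancel_right hS.1

theorem sum_sum_powerset_eq_sum_card_smul {V M : Type*} [Fintype V] [DecidableEq V]
    [AddCommMonoid M] (s : Finset (Finset V)) (f : Finset V → M) :
    ∑ T ∈ s, ∑ J ∈ T.powerset, f J = ∑ J, #{T ∈ s | J ⊆ T} • f J := by
  rw [sum_comm' (t' := univ) (s' := fun J => {T ∈ s | J ⊆ T}) (by simp)]
  simp only [sum_const]

noncomputable def handelmanLambda (n t j : ℕ) : ℝ :=
  ((n - 1).choose (t - 1) - (n - j).choose (t - j) : ℝ) / (n - 1).choose (t - 1)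

theorem handelmanLambda_one (n t : ℕ) : handelmanLambda n t 1 = 0 := by
  simp [handelmanLambda]

theorem choose_le_choose_pred {n t j : ℕ} (hj : 1 ≤ j) (hjt : j ≤ t) (htn : t ≤ n) :
    (n - j).choose (t - j) ≤ (n - 1).choose (t - 1) := by
  rw [Nat.choose_symm_of_eq_add (show n - j = (t - j) + (n - t) by omega),
    Nat.choose_symm_of_eq_add (show n - 1 = (t - 1) + (n - t) by omega)]
  exact Nat.choose_le_choose _ (by omega)

theorem handelmanLambda_nonneg {n t j : ℕ} (hj : 1 ≤ j) (hjt : j ≤ t) (htn : t ≤ n) :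
    0 ≤ handelmanLambda n t j :=
  div_nonneg (sub_nonneg.2 (by exact_mod_cast choose_le_choose_pred hj hjt htn)) (Nat.cast_nonneg _)

theorem choose_div_choose_pred {n t : ℕ} (ht : 1 ≤ t) (htn : t ≤ n) :
    (n.choose t : ℝ) / (n - 1).choose (t - 1) = n / t := by
  obtain ⟨m, rfl⟩ := Nat.exists_eq_add_of_le' (ht.trans htn)
  obtain ⟨k, rfl⟩ := Nat.exists_eq_add_of_le' ht
  have h := Nat.add_one_mul_choose_eq m k
  have hpos : (0 : ℝ) < m.choose k := by exact_mod_cast Nat.choose_pos (by omega)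
  simp only [Nat.add_sub_cancel]
  rw [div_eq_div_iff hpos.ne' (by positivity)]
  exact_mod_cast h.symm

theorem sum_powersetCard_sum_C_mul_handTerm {n t : ℕ} {c : Finset (Fin n) → ℝ} (hc : ∀ J, t < #J → c J = 0)
    (ht : 1 ≤ t) (htn : t ≤ n) (M : ℝ) :
    ∑ T : Finset (Fin n) with #T = t, ∑ I ∈ T.powerset,
        C ((M - ∑ J ∈ I.powerset, c J) / (n - 1).choose (t - 1)) * handTerm T I
      = C (n / t * M) - ∑ J, C (c J * (1 - handelmanLambda n t #J)) * ∏ i ∈ J, X i := by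
  have hch : ((n - 1).choose (t - 1) : ℝ) ≠ 0 := by exact_mod_cast (Nat.choose_pos (by omega)).ne'
  have hface : ∀ T : Finset (Fin n), ∑ I ∈ T.powerset,
        C ((M - ∑ J ∈ I.powerset, c J) / (n - 1).choose (t - 1)) * handTerm T I
      = C (M / (n - 1).choose (t - 1))
        - ∑ J ∈ T.powerset, C (c J / (n - 1).choose (t - 1)) * ∏ i ∈ J, X i := fun T => by
    simp only [sub_div, map_sub, sub_mul, sum_sub_distrib, ← mul_sum, sum_handTerm, mul_one, sum_div,
      sum_C_mul_handTerm]
  rw [sum_congr rfl fun T _ => hface T, sum_sub_distrib, sum_const, sum_sum_powerset_eq_sum_card_smul]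
  congr 1
  · have hcard : #{T : Finset (Fin n) | #T = t} = n.choose t := by simp
    rw [hcard, ← choose_div_choose_pred ht htn, nsmul_eq_mul, ← map_natCast C, ← map_mul]
    congr 1
    field_simp
  · refine sum_congr rfl fun J _ => ?_
    rw [filter_filter]
    rcases le_or_gt #J t with hJ | hJ
    · rw [card_filter_card_eq_and_subset hJ, Fintype.card_fin, nsmul_eq_mul, ← map_natCast C,
        ← mul_assoc, ← map_mul, handelmanLambda]
      congr 2
      field_simp
      ring
    · simp [hc J hJ]

section Certificate

variable {n t : ℕ} {p : MvPolynomial (Fin n) ℝ}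

theorem C_posPart_mul_one_sub_add_C_negPart_mul {σ : Type*} (a lam : ℝ) (q : MvPolynomial σ ℝ) :
    C (a⁺ * lam) * (1 - q) + C (a⁻ * lam) * q = C (a⁺ * lam) - C (a * lam) * q := by
  have h : (C (a * lam) : MvPolynomial σ ℝ) = C (a⁺ * lam) - C (a⁻ * lam) := by
    rw [← map_sub, ← sub_mul, posPart_sub_negPart]
  rw [h]
  ring

theorem inHandelman_correction (h0 : p.coeff 0 = 0) (hdeg : p.totalDegree ≤ t) (htn : t ≤ n)
    (J : Finset (Fin n)) :
    InHandelman t (C ((p.coeff (monOf J))⁺ * handelmanLambda n t #J) * (1 - ∏ i ∈ J, X i)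
      + C ((p.coeff (monOf J))⁻ * handelmanLambda n t #J) * ∏ i ∈ J, X i) := by
  by_cases hJ : p.coeff (monOf J) = 0
  · simpa [hJ] using InHandelman.zero
  have hJt : #J ≤ t := not_lt.1 fun h => hJ (coeff_monOf_eq_zero_of_totalDegree_lt (hdeg.trans_lt h))
  have hJ1 : 1 ≤ #J := one_le_card.2 (nonempty_iff_ne_empty.2 fun h => hJ (by simpa [h] using h0))
  have hlam := handelmanLambda_nonneg hJ1 hJt htn
  exact .add (.C_mul (mul_nonneg (posPart_nonneg _) hlam) (inHandelman_one_sub_prod_X hJt))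
    (.C_mul (mul_nonneg (negPart_nonneg _) hlam) (inHandelman_prod_X hJt))

theorem inHandelman_C_bound_sub (hsf : ∀ m ∈ p.support, ∀ i, m i ≤ 1) (h0 : p.coeff 0 = 0)
    (hdeg : p.totalDegree ≤ t) (ht : 1 ≤ t) (htn : t ≤ n) {M : ℝ}
    (hM : ∀ x : Fin n → ℝ, (∀ i, x i ∈ Set.Icc (0 : ℝ) 1) → eval x p ≤ M) :
    InHandelman t
      (C (n / t * M + ∑ J, (p.coeff (monOf J))⁺ * handelmanLambda n t #J) - p) := by
  set vertexPart := ∑ T : Finset (Fin n) with #T = t, ∑ I ∈ T.powerset,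
    C ((M - ∑ J ∈ I.powerset, p.coeff (monOf J)) / (n - 1).choose (t - 1)) * handTerm T I
  set correction := ∑ J : Finset (Fin n),
    (C ((p.coeff (monOf J))⁺ * handelmanLambda n t #J) * (1 - ∏ i ∈ J, X i)
      + C ((p.coeff (monOf J))⁻ * handelmanLambda n t #J) * ∏ i ∈ J, X i)
  have hsplit : C (n / t * M + ∑ J, (p.coeff (monOf J))⁺ * handelmanLambda n t #J) - p
      = vertexPart + correction := by
    have hp : p = ∑ J, C (p.coeff (monOf J) * (1 - handelmanLambda n t #J)) * ∏ i ∈ J, X i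
        + ∑ J, C (p.coeff (monOf J) * handelmanLambda n t #J) * ∏ i ∈ J, X i := by
      rw [← sum_add_distrib]
      refine (eq_sum_C_mul_prod_X hsf).trans (sum_congr rfl fun J _ => ?_)
      rw [← add_mul, ← map_add]
      ring_nf
    have hvanish (J : Finset (Fin n)) (hJ : t < #J) : p.coeff (monOf J) = 0 :=
      coeff_monOf_eq_zero_of_totalDegree_lt (hdeg.trans_lt hJ)
    simp only [vertexPart, correction, sum_powersetCard_sum_C_mul_handTerm hvanish ht htn,
      C_posPart_mul_one_sub_add_C_negPart_mul, map_add, map_sum, sum_sub_distrib]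
    linear_combination -hp
  rw [hsplit]
  refine .add (.sum fun T hT => .sum fun I hI => .C_mul ?_
    (inHandelman_handTerm (mem_filter.1 hT).2.le (mem_powerset.1 hI)))
    (.sum fun J _ => inHandelman_correction h0 hdeg htn J)
  have hvertex := hM (fun i => if i ∈ I then 1 else 0) fun i => by split_ifs <;> simp
  rw [eval_indicator_eq_sum_coeff hsf] at hvertex
  exact div_nonneg (sub_nonneg.2 hvertex) (Nat.cast_nonneg _)

end Certificate

theorem bddBelow_setOf_inHandelman {V : Type*} [Fintype V] [DecidableEq V] (t : ℕ)
    (p : MvPolynomial V ℝ) : BddBelow {lam : ℝ | InHandelman t (C lam - p)} :=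
  ⟨eval 0 p, fun lam h => by simpa using h.eval_nonneg (x := 0) fun _ => by simp⟩

theorem bddAbove_eval_cube {σ : Type*} (p : MvPolynomial σ ℝ) :
    BddAbove {v : ℝ | ∃ x : σ → ℝ, (∀ i, x i ∈ Set.Icc (0 : ℝ) 1) ∧ v = eval x p} := by
  obtain ⟨M, hM⟩ := ((isCompact_univ_pi fun _ => isCompact_Icc).image (continuous_eval p)).bddAbove
  exact ⟨M, fun v ⟨x, hx, hv⟩ => hv ▸ hM ⟨x, fun i _ => hx i, rfl⟩⟩

theorem sum_filter_eq_sum_posPart {n t : ℕ} {p : MvPolynomial (Fin n) ℝ} (h0 : p.coeff 0 = 0) :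
    ∑ J : Finset (Fin n) with 2 ≤ #J ∧ 0 < p.coeff (monOf J),
        p.coeff (monOf J) * handelmanLambda n t #J
      = ∑ J, (p.coeff (monOf J))⁺ * handelmanLambda n t #J := by
  rw [sum_filter]
  refine sum_congr rfl fun J _ => ?_
  split_ifs with hJ
  · rw [posPart_eq_self.2 hJ.2.le]
  rcases le_or_gt (p.coeff (monOf J)) 0 with hneg | hpos
  · rw [posPart_eq_zero.2 hneg, zero_mul]
  have hJ1 : #J = 1 := by
    have : #J ≠ 0 := fun h => hpos.ne' (by simpa [card_eq_zero.1 h] using h0)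
    have : #J < 2 := not_le.1 fun h => hJ ⟨h, hpos⟩
    omega
  rw [hJ1, handelmanLambda_one, mul_zero]

/-- Error bound for the Handelman hierarchy on the hypercube: if
`p = Σ_J p_J x^J` is square-free with `p(0) = 0`, `p_max` is its maximum over `[0,1]^n` and
`deg p ≤ t ≤ n`, then `p_han^{(t)} ≤ (n/t)·p_max + Σ_{|J| ≥ 2, p_J > 0} p_J λ_J`, where
`λ_J = (C(n−1,t−1) − C(n−|J|,t−|J|))/C(n−1,t−1)`.  In particular, if `p_J ≤ 0` for all
`|J| ≥ 2` then `p_han^{(t)} ≤ (n/t)·p_max`. -/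
theorem handelman_error_bound {n : ℕ} (p : MvPolynomial (Fin n) ℝ)
    (hsf : ∀ m ∈ p.support, ∀ i, m i ≤ 1) (h0 : p.coeff 0 = 0)
    (t : ℕ) (hdeg : p.totalDegree ≤ t) (htn : t ≤ n)
    (pmax : ℝ)
    (hpmax : pmax = sSup {v : ℝ | ∃ x : Fin n → ℝ,
      (∀ i, x i ∈ Set.Icc (0 : ℝ) 1) ∧ v = eval x p}) :
    (sInf {lam : ℝ | InHandelman t (C lam - p)} ≤ ((n : ℝ) / t) * pmax +
      ∑ J ∈ Finset.univ.filter
          (fun J : Finset (Fin n) => 2 ≤ J.card ∧ 0 < p.coeff (monOf J)),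
        p.coeff (monOf J) *
          (((Nat.choose (n - 1) (t - 1) : ℝ) - (Nat.choose (n - J.card) (t - J.card) : ℝ)) /
            (Nat.choose (n - 1) (t - 1) : ℝ))) ∧
    ((∀ J : Finset (Fin n), 2 ≤ J.card → p.coeff (monOf J) ≤ 0) →
      sInf {lam : ℝ | InHandelman t (C lam - p)} ≤ ((n : ℝ) / t) * pmax) := by
  have hbound : sInf {lam : ℝ | InHandelman t (C lam - p)} ≤ n / t * pmax +
      ∑ J, (p.coeff (monOf J))⁺ * handelmanLambda n t #J := by
    refine csInf_le (bddBelow_setOf_inHandelman t p) ?_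
    rcases Nat.eq_zero_or_pos t with rfl | ht
    · obtain rfl : p = 0 := by
        rw [totalDegree_eq_zero_iff_eq_C.1 (Nat.le_zero.1 hdeg), h0, map_zero]
      simpa using InHandelman.zero
    · refine inHandelman_C_bound_sub hsf h0 hdeg ht htn fun x hx => ?_
      exact hpmax ▸ le_csSup (bddAbove_eval_cube p) ⟨x, hx, rfl⟩
  rw [← sum_filter_eq_sum_posPart h0] at hbound
  refine ⟨hbound, fun hnonpos => hbound.trans_eq ?_⟩
  rw [add_eq_left]
  refine sum_eq_zero fun J hJ => absurd (hnonpos J (mem_filter.1 hJ).2.1) ?_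
  exact not_le.2 (mem_filter.1 hJ).2.2
end

section
/- Let p ∈ ℝ[x_1,…,x_n] be a square-free polynomial and t ≥ 1 an integer. Then the following are equivalent: (i) p ∈ 𝓗_t; (ii) p ∈ H_t + 𝓘; (iii) p ∈ H_t. In particular, for a square-free polynomial p, inf{λ : λ − p ∈ 𝓗_t} = inf{λ : λ − p ∈ H_t}. -/
/-!
Modulo the ideal `𝓘` every `x_i` is idempotent, so a generator `x^α (1 - x)^β` of `𝓗_t` is
congruent to `∏_{i ∈ A} x_i ∏_{i ∈ B} (1 - x_i)` with `A = supp α`, `B = supp β`. This is `0`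
modulo `𝓘` if `A` and `B` meet (as `x_i (1 - x_i) ∈ 𝓘`), and otherwise a generator of `H_t`, since
`|A ∪ B| ≤ |α + β| ≤ t`. Hence `𝓗_t ⊆ H_t + 𝓘`, while `H_t ⊆ 𝓗_t` is clear.

Square-free polynomials are determined modulo `𝓘`: the difference of two of them is square-free
and, if it lies in `𝓘`, vanishes on `{0,1}ⁿ`, so it is zero by the combinatorial Nullstellensatz.
Since every element of `H_t` is square-free, `p = q + r` with `q ∈ H_t`, `r ∈ 𝓘` and `p`
square-free forces `p = q`.
-/

open MvPolynomial Finset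

/-- Membership in the Handelman set `𝓗_t`: a conic combination of the products
`x^α (1−x)^β` over pairs `(α,β)` with `|α + β| ≤ t`. -/
def InCalH {n : ℕ} (t : ℕ) (p : MvPolynomial (Fin n) ℝ) : Prop :=
  ∃ (S : Finset ((Fin n → ℕ) × (Fin n → ℕ))) (c : (Fin n → ℕ) × (Fin n → ℕ) → ℝ),
    (∀ ab ∈ S, 0 ≤ c ab ∧ (∑ i, (ab.1 i + ab.2 i)) ≤ t) ∧
    p = ∑ ab ∈ S, C (c ab) *
      ((∏ i, X i ^ ab.1 i) * ∏ i, ((1 : MvPolynomial (Fin n) ℝ) - X i) ^ ab.2 i)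

section Cones

variable {σ : Type*} [Fintype σ] [DecidableEq σ]

noncomputable def calHGen (α β : σ → ℕ) : MvPolynomial σ ℝ :=
  (∏ i, X i ^ α i) * ∏ i, (1 - X i) ^ β i

def handelmanCone (t : ℕ) : PointedCone ℝ (MvPolynomial σ ℝ) where
  carrier := {p | InHandelman t p}
  zero_mem' := ⟨0, fun _ _ => le_rfl, by simp⟩
  add_mem' := by
    rintro _ _ ⟨c, hc, rfl⟩ ⟨c', hc', rfl⟩
    refine ⟨c + c', fun T I => add_nonneg (hc T I) (hc' T I), ?_⟩
    simp only [Pi.add_apply, map_add, add_mul, sum_add_distrib]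
  smul_mem' := by
    rintro ⟨a, ha⟩ _ ⟨c, hc, rfl⟩
    refine ⟨a • c, fun T I => mul_nonneg ha (hc T I), ?_⟩
    simp only [Nonneg.mk_smul, smul_eq_C_mul, mul_sum, Pi.smul_apply, smul_eq_mul, map_mul,
      mul_assoc]

def calHCone {n : ℕ} (t : ℕ) : PointedCone ℝ (MvPolynomial (Fin n) ℝ) where
  carrier := {p | InCalH t p}
  zero_mem' := ⟨∅, 0, by simp, by simp⟩
  add_mem' := by
    rintro _ _ ⟨S, c, hc, rfl⟩ ⟨S', c', hc', rfl⟩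
    refine ⟨S ∪ S', fun ab => (if ab ∈ S then c ab else 0) + (if ab ∈ S' then c' ab else 0),
      fun ab hab => ⟨add_nonneg ?_ ?_, ?_⟩, ?_⟩
    · split_ifs with h
      exacts [(hc ab h).1, le_rfl]
    · split_ifs with h
      exacts [(hc' ab h).1, le_rfl]
    · rcases mem_union.mp hab with h | h
      exacts [(hc ab h).2, (hc' ab h).2]
    · simp only [map_add, add_mul, sum_add_distrib, apply_ite C, map_zero, ite_mul, zero_mul,
        sum_ite_mem, union_inter_cancel_left, union_inter_cancel_right]
  smul_mem' := by
    rintro ⟨a, ha⟩ _ ⟨S, c, hc, rfl⟩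
    refine ⟨S, a • c, fun ab hab => ⟨mul_nonneg ha (hc ab hab).1, (hc ab hab).2⟩, ?_⟩
    simp only [Nonneg.mk_smul, smul_eq_C_mul, mul_sum, Pi.smul_apply, smul_eq_mul, map_mul,
      mul_assoc]

lemma handTerm_mem_handelmanCone {t : ℕ} {T I : Finset σ} (hIT : I ⊆ T) (hT : #T ≤ t) :
    handTerm T I ∈ handelmanCone t := by
  refine ⟨fun T' I' => if T' = T ∧ I' = I then 1 else 0, fun _ _ => by positivity, ?_⟩
  simp [ite_and, apply_ite C, ite_mul, sum_ite_eq', hT, hIT]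

lemma calHGen_mem_calHCone {n t : ℕ} {α β : Fin n → ℕ} (hw : ∑ i, (α i + β i) ≤ t) :
    calHGen α β ∈ calHCone t :=
  ⟨{(α, β)}, fun _ => 1, by simpa using hw, by simp [calHGen]⟩

end Cones

section SquareFree

lemma mem_restrictDegree_iff_degreeOf_le {σ R : Type*} [CommSemiring R] {p : MvPolynomial σ R}
    {d : ℕ} : p ∈ restrictDegree σ R d ↔ ∀ i, degreeOf i p ≤ d := by
  simp only [mem_restrictDegree, degreeOf_le_iff]
  exact ⟨fun h i m hm => h m hm i, fun h m hm i => h i m hm⟩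

variable {σ : Type*} [DecidableEq σ]

lemma degreeOf_handTerm_le_one (T I : Finset σ) (j : σ) : degreeOf j (handTerm T I) ≤ 1 := by
  have hX (i : σ) : degreeOf j (X i : MvPolynomial σ ℝ) = if j = i then 1 else 0 := degreeOf_X j i
  have hsub (i : σ) : degreeOf j (1 - X i : MvPolynomial σ ℝ) ≤ if j = i then 1 else 0 :=
    (degreeOf_sub_le _ _ _).trans (by simp [degreeOf_one, hX])
  calc degreeOf j (handTerm T I)
      ≤ ∑ i ∈ I, (if j = i then 1 else 0) + ∑ i ∈ T \ I, (if j = i then 1 else 0) :=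
        (degreeOf_mul_le _ _ _).trans <| add_le_add
          ((degreeOf_prod_le _ _ _).trans (sum_le_sum fun i _ => (hX i).le))
          ((degreeOf_prod_le _ _ _).trans (sum_le_sum fun i _ => hsub i))
    _ = ∑ i ∈ I ∪ T \ I, if j = i then 1 else 0 := (sum_union disjoint_sdiff).symm
    _ ≤ 1 := by rw [sum_ite_eq]; split_ifs <;> simp

lemma mem_restrictDegree_of_mem_handelmanCone [Fintype σ] {t : ℕ} {p : MvPolynomial σ ℝ}
    (hp : p ∈ handelmanCone t) : p ∈ restrictDegree σ ℝ 1 := by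
  obtain ⟨c, -, rfl⟩ := hp
  refine sum_mem fun T _ => sum_mem fun I _ => ?_
  rw [← smul_eq_C_mul]
  exact Submodule.smul_mem _ _
    (mem_restrictDegree_iff_degreeOf_le.mpr (degreeOf_handTerm_le_one T I))

end SquareFree

section BooleanIdeal

variable {σ : Type*}

noncomputable def booleanIdeal (σ : Type*) : Ideal (MvPolynomial σ ℝ) :=
  Ideal.span (Set.range fun i : σ => X i ^ 2 - X i)

lemma eval_eq_zero_of_mem_booleanIdeal {x : σ → ℝ} (hx : ∀ i, x i = 0 ∨ x i = 1)
    {r : MvPolynomial σ ℝ} (hr : r ∈ booleanIdeal σ) : eval x r = 0 := by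
  refine (Ideal.span_le.mpr ?_ hr : r ∈ RingHom.ker (eval x))
  rintro _ ⟨i, rfl⟩
  rcases hx i with h | h <;> simp [h]

lemma eq_of_sub_mem_booleanIdeal [Finite σ] {p q : MvPolynomial σ ℝ}
    (hp : p ∈ restrictDegree σ ℝ 1) (hq : q ∈ restrictDegree σ ℝ 1)
    (h : p - q ∈ booleanIdeal σ) : p = q := by
  classical
  refine sub_eq_zero.mp <| eq_zero_of_eval_zero_at_prod_finset _ (fun _ => {0, 1})
    (fun i => ?_) (fun x hx => eval_eq_zero_of_mem_booleanIdeal (by simpa using hx) h)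
  have := mem_restrictDegree_iff_degreeOf_le.mp (sub_mem hp hq) i
  simp only [mem_singleton, zero_ne_one, not_false_eq_true, card_insert_of_notMem,
    card_singleton]
  omega

lemma isIdempotentElem_mk_X (i : σ) :
    IsIdempotentElem (Ideal.Quotient.mk (booleanIdeal σ) (X i)) := by
  rw [IsIdempotentElem, ← map_mul, ← sq, Ideal.Quotient.eq]
  exact Ideal.subset_span ⟨i, rfl⟩

end BooleanIdeal

section Reduction

lemma prod_pow_eq_prod_filter_of_isIdempotentElem {ι M : Type*} [CommMonoid M] (s : Finset ι)
    {z : ι → M} (hz : ∀ i, IsIdempotentElem (z i)) (e : ι → ℕ) :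
    ∏ i ∈ s, z i ^ e i = ∏ i ∈ s.filter (e · ≠ 0), z i := by
  rw [prod_filter]
  refine prod_congr rfl fun i _ => ?_
  by_cases h : e i = 0
  · simp [h]
  · simp [h, (hz i).pow_eq h]

lemma card_filter_ne_zero_le_sum {ι : Type*} (s : Finset ι) (e : ι → ℕ) :
    #(s.filter (e · ≠ 0)) ≤ ∑ i ∈ s, e i := by
  rw [card_eq_sum_ones, sum_filter]
  exact sum_le_sum fun i _ => by split_ifs <;> omega

variable {σ : Type*} [Fintype σ] [DecidableEq σ]

lemma exists_mem_handelmanCone_calHGen_sub_mem_booleanIdeal {t : ℕ} {α β : σ → ℕ}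
    (hw : ∑ i, (α i + β i) ≤ t) :
    ∃ q ∈ handelmanCone t, calHGen α β - q ∈ booleanIdeal σ := by
  set A := univ.filter (α · ≠ 0)
  set B := univ.filter (β · ≠ 0)
  set π := Ideal.Quotient.mk (booleanIdeal σ)
  have hπ : π (calHGen α β) = (∏ i ∈ A, π (X i)) * ∏ i ∈ B, (1 - π (X i)) := by
    simp only [calHGen, map_mul, map_prod, map_pow, map_sub, map_one]
    rw [prod_pow_eq_prod_filter_of_isIdempotentElem _ isIdempotentElem_mk_X,
      prod_pow_eq_prod_filter_of_isIdempotentElem _ fun i => (isIdempotentElem_mk_X i).one_sub]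
  by_cases hAB : Disjoint A B
  · have hcard : #(A ∪ B) ≤ t := calc
      #(A ∪ B) ≤ #A + #B := card_union_le _ _
      _ ≤ ∑ i, α i + ∑ i, β i :=
        add_le_add (card_filter_ne_zero_le_sum _ _) (card_filter_ne_zero_le_sum _ _)
      _ ≤ t := sum_add_distrib.symm.trans_le hw
    refine ⟨handTerm (A ∪ B) A, handTerm_mem_handelmanCone subset_union_left hcard, ?_⟩
    rw [← Ideal.Quotient.eq, hπ, handTerm, union_sdiff_cancel_left hAB]
    simp only [map_mul, map_prod, map_sub, map_one]
    rfl
  · obtain ⟨i, hiA, hiB⟩ := not_disjoint_iff.mp hAB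
    refine ⟨0, zero_mem _, ?_⟩
    rw [sub_zero, ← Ideal.Quotient.eq_zero_iff_mem, hπ, ← mul_prod_erase A _ hiA,
      ← mul_prod_erase B _ hiB, mul_mul_mul_comm, mul_one_sub, (isIdempotentElem_mk_X i).eq,
      sub_self, zero_mul]

lemma exists_mem_handelmanCone_sub_mem_booleanIdeal {n t : ℕ} {p : MvPolynomial (Fin n) ℝ}
    (hp : p ∈ calHCone t) : ∃ q ∈ handelmanCone t, p - q ∈ booleanIdeal (Fin n) := by
  obtain ⟨S, c, hc, rfl⟩ := hp
  choose! q hq hpq using fun ab (hab : ab ∈ S) =>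
    exists_mem_handelmanCone_calHGen_sub_mem_booleanIdeal (hc ab hab).2
  refine ⟨∑ ab ∈ S, C (c ab) * q ab, sum_mem fun ab hab => ?_, ?_⟩
  · rw [← smul_eq_C_mul]
    exact (handelmanCone t).smul_mem (hc ab hab).1 (hq ab hab)
  · rw [← sum_sub_distrib]
    exact sum_mem fun ab hab => by
      rw [← mul_sub]; exact Ideal.mul_mem_left _ _ (hpq ab hab)

lemma handelmanCone_le_calHCone {n t : ℕ} :
    handelmanCone t ≤ (calHCone t : PointedCone ℝ (MvPolynomial (Fin n) ℝ)) := by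
  rintro _ ⟨c, hc, rfl⟩
  refine sum_mem fun T hT => sum_mem fun I hI => ?_
  rw [mem_powerset] at hI
  have hgen : handTerm T I =
      calHGen (fun i => if i ∈ I then 1 else 0) (fun i => if i ∈ T \ I then 1 else 0) := by
    simp only [calHGen, handTerm, pow_ite, pow_one, pow_zero, prod_ite_mem, univ_inter]
  have hw : ∑ i, ((if i ∈ I then 1 else 0) + (if i ∈ T \ I then 1 else 0)) = #T := by
    simp only [sum_add_distrib, sum_ite_mem, univ_inter, ← card_eq_sum_ones]
    exact add_comm _ _ |>.trans (card_sdiff_add_card_eq_card hI)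
  rw [hgen, ← smul_eq_C_mul]
  exact (calHCone t).smul_mem (hc T I)
    (calHGen_mem_calHCone (hw.trans_le (mem_filter.mp hT).2))

end Reduction

lemma mem_handelmanCone_of_sub_mem_booleanIdeal {σ : Type*} [Fintype σ] [DecidableEq σ]
    {t : ℕ} {p q : MvPolynomial σ ℝ} (hp : p ∈ restrictDegree σ ℝ 1) (hq : q ∈ handelmanCone t)
    (hpq : p - q ∈ booleanIdeal σ) : p ∈ handelmanCone t :=
  eq_of_sub_mem_booleanIdeal hp (mem_restrictDegree_of_mem_handelmanCone hq) hpq ▸ hq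

lemma mem_calHCone_iff_mem_handelmanCone {n t : ℕ} {p : MvPolynomial (Fin n) ℝ}
    (hp : p ∈ restrictDegree (Fin n) ℝ 1) : p ∈ calHCone t ↔ p ∈ handelmanCone t := by
  refine ⟨fun h => ?_, fun h => handelmanCone_le_calHCone h⟩
  obtain ⟨q, hq, hpq⟩ := exists_mem_handelmanCone_sub_mem_booleanIdeal h
  exact mem_handelmanCone_of_sub_mem_booleanIdeal hp hq hpq

theorem calH_eq_Ht_general {n : ℕ} (p : MvPolynomial (Fin n) ℝ)
    (hsf : ∀ m ∈ p.support, ∀ i, m i ≤ 1) (t : ℕ) :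
    (InCalH t p ↔ InHandelman t p) ∧
    (InCalH t p ↔ ∃ q r : MvPolynomial (Fin n) ℝ, InHandelman t q ∧
      r ∈ Ideal.span (Set.range fun i : Fin n => (X i) ^ 2 - X i) ∧ p = q + r) ∧
    sInf {lam : ℝ | InCalH t (C lam - p)} = sInf {lam : ℝ | InHandelman t (C lam - p)} := by
  have hp : p ∈ restrictDegree (Fin n) ℝ 1 := (mem_restrictDegree _ _ _).mpr hsf
  refine ⟨mem_calHCone_iff_mem_handelmanCone hp, ⟨fun h => ?_, ?_⟩, ?_⟩
  · obtain ⟨q, hq, hpq⟩ := exists_mem_handelmanCone_sub_mem_booleanIdeal h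
    exact ⟨q, p - q, hq, hpq, (add_sub_cancel q p).symm⟩
  · rintro ⟨q, r, hq, hr, rfl⟩
    refine handelmanCone_le_calHCone (mem_handelmanCone_of_sub_mem_booleanIdeal hp hq ?_)
    rwa [add_sub_cancel_left]
  · have hC (lam : ℝ) : C lam ∈ restrictDegree (Fin n) ℝ 1 :=
      mem_restrictDegree_iff_degreeOf_le.mpr fun i => (degreeOf_C lam i).trans_le zero_le_one
    congr 1
    ext lam
    exact mem_calHCone_iff_mem_handelmanCone (sub_mem (hC lam) hp)

/-- For a square-free polynomial `p` and `t ≥ 1`, membership in `𝓗_t`,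
in `H_t + 𝓘` and in `H_t` are all equivalent; in particular
`inf{λ : λ − p ∈ 𝓗_t} = inf{λ : λ − p ∈ H_t}`. -/
theorem calH_eq_Ht {n : ℕ} (p : MvPolynomial (Fin n) ℝ)
    (hsf : ∀ m ∈ p.support, ∀ i, m i ≤ 1) (t : ℕ) (ht : 1 ≤ t) :
    (InCalH t p ↔ InHandelman t p) ∧
    (InCalH t p ↔ ∃ q r : MvPolynomial (Fin n) ℝ, InHandelman t q ∧
      r ∈ Ideal.span (Set.range fun i : Fin n => (X i) ^ 2 - X i) ∧ p = q + r) ∧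
    sInf {lam : ℝ | InCalH t (C lam - p)} = sInf {lam : ℝ | InHandelman t (C lam - p)} :=
  calH_eq_Ht_general p hsf t
end

section
/- Let G = (V,E) be a finite simple graph with node weights w ∈ ℝ_+^V and edge weights satisfying w_{ij} ≥ min{w_i, w_j} for all edges ij ∈ E. Then α(G,w) = max_{x ∈ [0,1]^V} p_{G,w}(x) = max_{x ∈ {0,1}^V} p_{G,w}(x). -/
open MvPolynomial Finset

open Classical in
noncomputable def pGW {V : Type*} [Fintype V] (G : SimpleGraph V)
    (w : V → ℝ) (W : V → V → ℝ) : MvPolynomial V ℝ :=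
  (∑ i, C (w i) * X i) -
    C (2⁻¹ : ℝ) * ∑ q ∈ Finset.univ.filter (fun q : V × V => G.Adj q.1 q.2),
      C (W q.1 q.2) * (X q.1 * X q.2)

noncomputable def alphaW {V : Type*} (G : SimpleGraph V) (w : V → ℝ) : ℝ :=
  sSup {v : ℝ | ∃ S : Finset V, (∀ i ∈ S, ∀ j ∈ S, ¬ G.Adj i j) ∧ v = ∑ i ∈ S, w i}

/-!
`p_{G,w}` is affine in each coordinate, so pushing the coordinates of a point of `[0,1]^V` to `0`
or `1` one at a time, each time towards the larger value, ends at a `0/1` point without decreasing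
`p_{G,w}`. At the indicator of `U`, if `U` contains an edge `ab` with `w_a ≤ w_b`, deleting `a`
from `U` changes the value by `-w_a + ½ ∑_{k ∈ U, k ~ a} (w_{ak} + w_{ka})`, which is at least
`-w_a + min(w_a, w_b) = 0`. Deleting vertices like this ends at a stable set `S`, where the value
is `w(S)`.
-/

theorem exists_zero_one_le_of_affine_update {V : Type*} [Fintype V] [DecidableEq V]
    (f : (V → ℝ) → ℝ) (hf : ∀ x i, ∃ a c : ℝ, ∀ t, f (Function.update x i t) = a + t * c)
    {x : V → ℝ} (hx : ∀ i, x i ∈ Set.Icc (0 : ℝ) 1) :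
    ∃ y : V → ℝ, (∀ i, y i = 0 ∨ y i = 1) ∧ f x ≤ f y := by
  suffices key : ∀ s : Finset V, ∀ x : V → ℝ, (∀ i, x i ∈ Set.Icc (0 : ℝ) 1) →
      (∀ i ∉ s, x i = 0 ∨ x i = 1) → ∃ y : V → ℝ, (∀ i, y i = 0 ∨ y i = 1) ∧ f x ≤ f y from
    key univ x hx fun i hi => absurd (mem_univ i) hi
  intro s
  induction s using Finset.induction_on with
  | empty => exact fun x _ hx => ⟨x, fun i => hx i (notMem_empty i), le_rfl⟩
  | insert i s _ ih =>
    intro x hbox hs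
    obtain ⟨a, c, hac⟩ := hf x i
    have hfx : f x = a + x i * c := by simpa using hac (x i)
    obtain ⟨t, ht, hle⟩ : ∃ t : ℝ, (t = 0 ∨ t = 1) ∧ f x ≤ f (Function.update x i t) := by
      obtain ⟨hx0, hx1⟩ := hbox i
      rcases le_total 0 c with hc | hc
      · exact ⟨1, Or.inr rfl, by rw [hfx, hac]; nlinarith⟩
      · exact ⟨0, Or.inl rfl, by rw [hfx, hac]; nlinarith⟩
    refine (ih (Function.update x i t) (fun j => ?_) (fun j hj => ?_)).imp
      fun y hy => ⟨hy.1, hle.trans hy.2⟩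
    · rcases eq_or_ne j i with rfl | hji
      · rcases ht with rfl | rfl <;> simp
      · simpa [hji] using hbox j
    · rcases eq_or_ne j i with rfl | hji
      · simpa using ht
      · simpa [hji] using hs j (by simp [hji, hj])

section pGW

variable {V : Type*} [Fintype V] (G : SimpleGraph V) (w : V → ℝ) (W : V → V → ℝ)

open Classical in
theorem eval_pGW (x : V → ℝ) :
    eval x (pGW G w W) = ∑ i, w i * x i
      - 2⁻¹ * ∑ a, ∑ b, if G.Adj a b then W a b * (x a * x b) else 0 := by
  simp only [pGW, Finset.sum_filter, map_sub, map_mul, map_sum, eval_C, eval_X,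
    apply_ite (eval x), map_zero, Fintype.sum_prod_type]

open Classical in
theorem eval_pGW_update [DecidableEq V] (x : V → ℝ) (i : V) (t : ℝ) :
    eval (Function.update x i t) (pGW G w W) = eval (Function.update x i 0) (pGW G w W)
      + t * (w i - 2⁻¹ * ∑ k, if G.Adj i k then (W i k + W k i) * x k else 0) := by
  have hlin : ∀ j, w j * Function.update x i t j
      = w j * Function.update x i 0 j + t * if j = i then w i else 0 := by
    intro j; rcases eq_or_ne j i with rfl | hj <;> simp [*, mul_comm]
  have hquad : ∀ a b,
      (if G.Adj a b then W a b * (Function.update x i t a * Function.update x i t b) else 0)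
      = (if G.Adj a b then W a b * (Function.update x i 0 a * Function.update x i 0 b) else 0)
        + t * ((if a = i then if G.Adj i b then W i b * x b else 0 else 0)
          + if b = i then if G.Adj i a then W a i * x a else 0 else 0) := by
    intro a b
    by_cases hab : G.Adj a b
    · have hne := G.ne_of_adj hab
      rcases eq_or_ne a i with rfl | ha
      · simp only [hab, ↓reduceIte, Function.update_self, ne_eq, hne.symm, not_false_eq_true,
          Function.update_of_ne, zero_mul, mul_zero, add_zero, zero_add]
        ring
      rcases eq_or_ne b i with rfl | hb
      · simp only [hab, hab.symm, ↓reduceIte, ne_eq, ha, not_false_eq_true, Function.update_of_ne,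
          Function.update_self, mul_zero, zero_add]
        ring
      · simp [hab, ha, hb]
    · have hba : ¬ G.Adj b a := fun h => hab h.symm
      split_ifs <;> simp_all
  have hsplit : (∑ k, if G.Adj i k then (W i k + W k i) * x k else 0)
      = (∑ k, if G.Adj i k then W i k * x k else 0)
        + ∑ k, if G.Adj i k then W k i * x k else 0 := by
    rw [← Finset.sum_add_distrib]
    exact Finset.sum_congr rfl fun k _ => by split_ifs <;> ring
  simp only [eval_pGW, hlin, hquad, hsplit, Finset.sum_add_distrib, ← Finset.mul_sum,
    Finset.sum_ite_irrel, Finset.sum_const_zero, Finset.sum_ite_eq', mem_univ, if_true]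
  ring

theorem exists_zero_one_eval_pGW_ge [DecidableEq V] {x : V → ℝ}
    (hx : ∀ i, x i ∈ Set.Icc (0 : ℝ) 1) :
    ∃ y : V → ℝ, (∀ i, y i = 0 ∨ y i = 1) ∧ eval x (pGW G w W) ≤ eval y (pGW G w W) :=
  exists_zero_one_le_of_affine_update (fun x => eval x (pGW G w W))
    (fun x i => ⟨_, _, eval_pGW_update G w W x i⟩) hx

end pGW

section stable

variable {V : Type*} [Fintype V] {G : SimpleGraph V} {w : V → ℝ} {W : V → V → ℝ}

theorem eval_pGW_indicator_of_stable {S : Finset V} (hS : ∀ i ∈ S, ∀ j ∈ S, ¬ G.Adj i j) :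
    eval ((S : Set V).indicator 1) (pGW G w W) = ∑ i ∈ S, w i := by
  classical
  have hquad : ∀ a b,
      (if G.Adj a b then W a b * ((S : Set V).indicator 1 a * (S : Set V).indicator 1 b)
        else 0) = 0 := by
    intro a b
    by_cases ha : a ∈ S
    · by_cases hb : b ∈ S
      · simp [hS a ha b hb]
      · simp [hb]
    · simp [ha]
  rw [eval_pGW]
  simp only [hquad, Finset.sum_const_zero, mul_zero, sub_zero]
  simp [Set.indicator_apply]

theorem eval_pGW_indicator_le_erase [DecidableEq V] (hw : ∀ v, 0 ≤ w v)
    (hW : ∀ i j, G.Adj i j → min (w i) (w j) ≤ W i j) {U : Finset V} {a b : V}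
    (ha : a ∈ U) (hb : b ∈ U) (hab : G.Adj a b) (hwab : w a ≤ w b) :
    eval ((U : Set V).indicator 1) (pGW G w W)
      ≤ eval ((U.erase a : Set V).indicator 1) (pGW G w W) := by
  classical
  set x : V → ℝ := (U : Set V).indicator 1
  have hx : Function.update x a 1 = x := by
    ext k; rcases eq_or_ne k a with rfl | hk <;> simp [x, *]
  have hxa : Function.update x a 0 = (U.erase a : Set V).indicator 1 := by
    ext k; rcases eq_or_ne k a with rfl | hk <;> simp [x, Set.indicator_apply, *]
  have hW_nonneg : ∀ i j, G.Adj i j → 0 ≤ W i j :=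
    fun i j hij => (le_min (hw i) (hw j)).trans (hW i j hij)
  have hterm : ∀ k, 0 ≤ if G.Adj a k then (W a k + W k a) * x k else 0 := by
    intro k
    split_ifs with hk
    · exact mul_nonneg (add_nonneg (hW_nonneg a k hk) (hW_nonneg k a hk.symm))
        (Set.indicator_nonneg (fun _ _ => zero_le_one) k)
    · exact le_rfl
  have hb_term : 2 * w a ≤ if G.Adj a b then (W a b + W b a) * x b else 0 := by
    simp only [hab, if_true, x, Set.indicator_of_mem (Finset.mem_coe.2 hb), Pi.one_apply, mul_one]
    linarith [hW a b hab, hW b a hab.symm, min_eq_left hwab, min_eq_right hwab]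
  have hsum := hb_term.trans (Finset.single_le_sum (fun k _ => hterm k) (mem_univ b))
  rw [← hx, eval_pGW_update, hxa]
  linarith

theorem exists_stable_eval_pGW_indicator_le [DecidableEq V] (hw : ∀ v, 0 ≤ w v)
    (hW : ∀ i j, G.Adj i j → min (w i) (w j) ≤ W i j) (U : Finset V) :
    ∃ S : Finset V, (∀ i ∈ S, ∀ j ∈ S, ¬ G.Adj i j) ∧
      eval ((U : Set V).indicator 1) (pGW G w W) ≤ ∑ i ∈ S, w i := by
  induction U using Finset.strongInduction with
  | H U ih =>
    by_cases hU : ∀ i ∈ U, ∀ j ∈ U, ¬ G.Adj i j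
    · exact ⟨U, hU, (eval_pGW_indicator_of_stable hU).le⟩
    push Not at hU
    obtain ⟨i, hi, j, hj, hij⟩ := hU
    obtain ⟨a, b, ha, hb, hab, hwab⟩ : ∃ a b, a ∈ U ∧ b ∈ U ∧ G.Adj a b ∧ w a ≤ w b := by
      rcases le_total (w i) (w j) with h | h
      exacts [⟨i, j, hi, hj, hij, h⟩, ⟨j, i, hj, hi, hij.symm, h⟩]
    obtain ⟨S, hS, hle⟩ := ih (U.erase a) (Finset.erase_ssubset ha)
    exact ⟨S, hS, (eval_pGW_indicator_le_erase hw hW ha hb hab hwab).trans hle⟩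

theorem exists_zero_one_eval_pGW_ge_of_stable {S : Finset V}
    (hS : ∀ i ∈ S, ∀ j ∈ S, ¬ G.Adj i j) :
    ∃ y : V → ℝ, (∀ i, y i = 0 ∨ y i = 1) ∧ ∑ i ∈ S, w i ≤ eval y (pGW G w W) := by
  refine ⟨(S : Set V).indicator 1, fun i => ?_, (eval_pGW_indicator_of_stable hS).ge⟩
  by_cases hi : i ∈ S <;> simp [hi]

theorem exists_stable_eval_pGW_le_of_zero_one (hw : ∀ v, 0 ≤ w v)
    (hW : ∀ i j, G.Adj i j → min (w i) (w j) ≤ W i j) {y : V → ℝ} (hy : ∀ i, y i = 0 ∨ y i = 1) :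
    ∃ S : Finset V, (∀ i ∈ S, ∀ j ∈ S, ¬ G.Adj i j) ∧ eval y (pGW G w W) ≤ ∑ i ∈ S, w i := by
  classical
  have hy_indicator : y = ((univ.filter fun i => y i = 1 : Finset V) : Set V).indicator 1 := by
    ext i; rcases hy i with h | h <;> simp [h]
  rw [hy_indicator]
  exact exists_stable_eval_pGW_indicator_le hw hW _

end stable

theorem alpha_eq_max_pGW_general {V : Type*} [Fintype V] (G : SimpleGraph V)
    (w : V → ℝ) (W : V → V → ℝ) (hw : ∀ v, 0 ≤ w v)
    (hW : ∀ i j, G.Adj i j → min (w i) (w j) ≤ W i j) :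
    alphaW G w = sSup {v : ℝ | ∃ x : V → ℝ,
        (∀ i, x i ∈ Set.Icc (0 : ℝ) 1) ∧ v = eval x (pGW G w W)} ∧
    alphaW G w = sSup {v : ℝ | ∃ x : V → ℝ,
        (∀ i, x i = 0 ∨ x i = 1) ∧ v = eval x (pGW G w W)} := by
  classical
  have zero_one_mem_box : ∀ y : V → ℝ, (∀ i, y i = 0 ∨ y i = 1) → ∀ i, y i ∈ Set.Icc (0 : ℝ) 1 :=
    fun y hy i => by rcases hy i with h | h <;> simp [h]
  refine ⟨csSup_eq_csSup_of_forall_exists_le ?_ ?_, csSup_eq_csSup_of_forall_exists_le ?_ ?_⟩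
  · rintro _ ⟨S, hS, rfl⟩
    obtain ⟨y, hy, hSy⟩ := exists_zero_one_eval_pGW_ge_of_stable (W := W) hS
    exact ⟨_, ⟨y, zero_one_mem_box y hy, rfl⟩, hSy⟩
  · rintro _ ⟨x, hx, rfl⟩
    obtain ⟨y, hy, hxy⟩ := exists_zero_one_eval_pGW_ge G w W hx
    obtain ⟨S, hS, hyS⟩ := exists_stable_eval_pGW_le_of_zero_one hw hW hy
    exact ⟨_, ⟨S, hS, rfl⟩, hxy.trans hyS⟩
  · rintro _ ⟨S, hS, rfl⟩
    obtain ⟨y, hy, hSy⟩ := exists_zero_one_eval_pGW_ge_of_stable (W := W) hS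
    exact ⟨_, ⟨y, hy, rfl⟩, hSy⟩
  · rintro _ ⟨y, hy, rfl⟩
    obtain ⟨S, hS, hyS⟩ := exists_stable_eval_pGW_le_of_zero_one hw hW hy
    exact ⟨_, ⟨S, hS, rfl⟩, hyS⟩

/-- For node weights `w ≥ 0` and edge weights `w_{ij} ≥ min(w_i,w_j)`,
`α(G,w)` equals the maximum of `p_{G,w}` over `[0,1]^V`, and also over `{0,1}^V`. -/
theorem alpha_eq_max_pGW {V : Type*} [Fintype V] [DecidableEq V] (G : SimpleGraph V)
    (w : V → ℝ) (W : V → V → ℝ) (hw : ∀ v, 0 ≤ w v)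
    (hWs : ∀ i j, W i j = W j i)
    (hW : ∀ i j, G.Adj i j → min (w i) (w j) ≤ W i j) :
    alphaW G w = sSup {v : ℝ | ∃ x : V → ℝ,
        (∀ i, x i ∈ Set.Icc (0 : ℝ) 1) ∧ v = eval x (pGW G w W)} ∧
    alphaW G w = sSup {v : ℝ | ∃ x : V → ℝ,
        (∀ i, x i = 0 ∨ x i = 1) ∧ v = eval x (pGW G w W)} :=
  alpha_eq_max_pGW_general G w W hw hW
end

section
/- If G = (V,E) is a bipartite finite simple graph, then for any node weights w ∈ ℝ_+^V (with edge weights satisfying w_{ij} ≥ min{w_i, w_j} for all ij ∈ E) the Handelman rank satisfies rk_H(G,w) ≤ 2, i.e., the polynomial f_{G,w} = α(G,w) − p_{G,w} belongs to H_2. -/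
open MvPolynomial Finset

set_option linter.unusedSectionVars false

section Auxiliary

namespace FracHall

variable {V : Type*} [Fintype V] [DecidableEq V]

open scoped Classical

noncomputable def NXs (r : V → V → Prop) (R X : Finset V) : Finset V :=
  R.filter (fun j => ∃ i ∈ X, r i j)

noncomputable def tflag (r : V → V → Prop) (L R : Finset V) (w : V → ℝ) : ℕ :=
  if ∃ X, X ⊆ L ∧ X.Nonempty ∧ X ≠ L ∧ ∑ i ∈ X, w i = ∑ j ∈ NXs r R X, w j then 0 else 1

noncomputable def cnt (w : V → ℝ) : ℕ := (univ.filter (fun v : V => w v ≠ 0)).card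

noncomputable def meas (r : V → V → Prop) (L R : Finset V) (w : V → ℝ) : ℕ :=
  (2 * Fintype.card V + 4) * L.card + 2 * cnt w + tflag r L R w

lemma cnt_le (w : V → ℝ) : cnt w ≤ Fintype.card V := Finset.card_filter_le _ _

lemma tflag_le (r : V → V → Prop) (L R : Finset V) (w : V → ℝ) : tflag r L R w ≤ 1 := by
  unfold tflag; split <;> omega

lemma meas_lt_of_card_lt {r : V → V → Prop} {L L' R R' : Finset V} {w w' : V → ℝ}
    (h : L'.card < L.card) : meas r L' R' w' < meas r L R w := by
  unfold meas
  have h1 := cnt_le (V := V) w'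
  have h2 := tflag_le r L' R' w'
  have h3 : (2 * Fintype.card V + 4) * (L'.card + 1) ≤ (2 * Fintype.card V + 4) * L.card :=
    Nat.mul_le_mul_left _ (by omega)
  nlinarith [Nat.zero_le (2 * cnt w), Nat.zero_le (tflag r L R w)]

def FHout (r : V → V → Prop) (L R : Finset V) (w : V → ℝ) (y : V → V → ℝ) : Prop :=
  (∀ i j, 0 ≤ y i j) ∧ (∀ i j, y i j ≠ 0 → i ∈ L ∧ j ∈ R ∧ r i j) ∧
  (∀ i ∈ L, ∑ j, y i j = w i) ∧ (∀ j, ∑ i, y i j ≤ w j)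

lemma fracHallAux (r : V → V → Prop) : ∀ (n : ℕ) (L R : Finset V) (w : V → ℝ),
    meas r L R w ≤ n → Disjoint L R → (∀ v, 0 ≤ w v) →
    (∀ X ⊆ L, ∑ i ∈ X, w i ≤ ∑ j ∈ NXs r R X, w j) →
    ∃ y : V → V → ℝ, FHout r L R w y := by
  intro n
  induction n with
  | zero =>
    intro L R w hm hdisj hw hall
    have hL : L = ∅ := by
      have : (2 * Fintype.card V + 4) * L.card = 0 := by
        have : meas r L R w = 0 := Nat.le_zero.mp hm
        unfold meas at this; omega
      have : L.card = 0 := by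
        rcases Nat.mul_eq_zero.mp this with h | h
        · omega
        · exact h
      exact Finset.card_eq_zero.mp this
    subst hL
    exact ⟨fun _ _ => 0, fun _ _ => le_refl 0, fun i j h => absurd rfl h,
      fun i hi => absurd hi (Finset.notMem_empty i),
      fun j => by simpa using hw j⟩
  | succ n ih =>
    intro L R w hm hdisj hw hall
    by_cases hL : L = ∅
    · subst hL
      exact ⟨fun _ _ => 0, fun _ _ => le_refl 0, fun i j h => absurd rfl h,
        fun i hi => absurd hi (Finset.notMem_empty i),
        fun j => by simpa using hw j⟩
    by_cases hzero : ∃ i ∈ L, w i = 0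
    · obtain ⟨i0, hi0L, hi0w⟩ := hzero
      have hmeas : meas r (L.erase i0) R w ≤ n := by
        have := meas_lt_of_card_lt (r := r) (R := R) (R' := R) (w := w) (w' := w)
          (Finset.card_erase_lt_of_mem hi0L)
        omega
      obtain ⟨y, hy0, hysupp, hysat, hycap⟩ := ih (L.erase i0) R w hmeas
        (hdisj.mono_left (Finset.erase_subset _ _)) hw
        (fun X hX => hall X (hX.trans (Finset.erase_subset _ _)))
      refine ⟨y, hy0, fun i j h => ?_, fun i hi => ?_, hycap⟩
      · obtain ⟨h1, h2, h3⟩ := hysupp i j h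
        exact ⟨Finset.mem_of_mem_erase h1, h2, h3⟩
      · by_cases hii : i = i0
        · subst hii
          have : ∀ j, y i j = 0 := by
            intro j
            by_contra h
            exact Finset.notMem_erase i L (hysupp i j h).1
          rw [Finset.sum_congr rfl (fun j _ => this j), Finset.sum_const_zero, hi0w]
        · exact hysat i (Finset.mem_erase.mpr ⟨hii, hi⟩)
    by_cases htight : ∃ X, X ⊆ L ∧ X.Nonempty ∧ X ≠ L ∧ ∑ i ∈ X, w i = ∑ j ∈ NXs r R X, w j
    · obtain ⟨X, hXL, hXne, hXneL, hXtight⟩ := htight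
      have hmeas1 : meas r X R w ≤ n := by
        have hlt : X.card < L.card := Finset.card_lt_card (hXL.ssubset_of_ne hXneL)
        have := meas_lt_of_card_lt (r := r) (L := L) (L' := X) (R := R) (R' := R)
          (w := w) (w' := w) hlt
        omega
      obtain ⟨y1, h10, h1supp, h1sat, h1cap⟩ := ih X R w hmeas1 (hdisj.mono_left hXL) hw
        (fun Y hY => hall Y (hY.trans hXL))
      have h1van : ∀ i j, j ∉ NXs r R X → y1 i j = 0 := by
        intro i j hj
        by_contra h
        obtain ⟨hiX, hjR, hrij⟩ := h1supp i j h
        exact hj (Finset.mem_filter.mpr ⟨hjR, ⟨i, hiX, hrij⟩⟩)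
      have h1van' : ∀ i, i ∉ X → ∀ j, y1 i j = 0 := by
        intro i hi j
        by_contra h
        exact hi (h1supp i j h).1
      have hkey : ∑ j ∈ NXs r R X, ∑ i, y1 i j = ∑ j ∈ NXs r R X, w j := by
        rw [Finset.sum_comm]
        calc ∑ i, ∑ j ∈ NXs r R X, y1 i j = ∑ i, ∑ j, y1 i j := by
              refine Finset.sum_congr rfl fun i _ => ?_
              apply Finset.sum_subset (Finset.subset_univ _)
              intro j _ hj; exact h1van i j hj
          _ = ∑ i ∈ X, ∑ j, y1 i j := by
              symm
              apply Finset.sum_subset (Finset.subset_univ _)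
              intro i _ hi
              exact Finset.sum_eq_zero fun j _ => h1van' i hi j
          _ = ∑ i ∈ X, w i := Finset.sum_congr rfl fun i hi => h1sat i hi
          _ = ∑ j ∈ NXs r R X, w j := hXtight
      have h1tight : ∀ j ∈ NXs r R X, ∑ i, y1 i j = w j :=
        (Finset.sum_eq_sum_iff_of_le (fun j _ => h1cap j)).mp hkey
      set w' : V → ℝ := fun v => if v ∈ NXs r R X then 0 else w v with hw'def
      have hw' : ∀ v, 0 ≤ w' v := by
        intro v; simp only [hw'def]; split
        · exact le_refl 0
        · exact hw v
      have hwL : ∀ v ∈ L, w' v = w v := by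
        intro v hv
        have hnm : v ∉ NXs r R X := fun hmem =>
          (Finset.disjoint_left.mp hdisj hv) (Finset.mem_filter.mp hmem).1
        simp [hw'def, hnm]
      have hall2 : ∀ Y ⊆ L \ X, ∑ i ∈ Y, w' i ≤ ∑ j ∈ NXs r R Y, w' j := by
        intro Y hY
        have hYL : Y ⊆ L := hY.trans Finset.sdiff_subset
        have hYX : Disjoint Y X := Finset.disjoint_of_subset_left hY Finset.sdiff_disjoint
        have hUnion : NXs r R (X ∪ Y) = NXs r R X ∪ NXs r R Y := by
          unfold NXs
          ext j
          simp only [Finset.mem_filter, Finset.mem_union]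
          constructor
          · rintro ⟨hjR, i, hi | hi, hr⟩
            · exact Or.inl ⟨hjR, i, hi, hr⟩
            · exact Or.inr ⟨hjR, i, hi, hr⟩
          · rintro (⟨hjR, i, hi, hr⟩ | ⟨hjR, i, hi, hr⟩)
            · exact ⟨hjR, i, Or.inl hi, hr⟩
            · exact ⟨hjR, i, Or.inr hi, hr⟩
        have h1 : ∑ i ∈ X ∪ Y, w i ≤ ∑ j ∈ NXs r R (X ∪ Y), w j :=
          hall (X ∪ Y) (Finset.union_subset hXL hYL)
        rw [hUnion, Finset.sum_union hYX.symm] at h1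
        have hsplit : ∑ j ∈ NXs r R X ∪ NXs r R Y, w j
            = ∑ j ∈ NXs r R X, w j + ∑ j ∈ NXs r R Y \ NXs r R X, w j := by
          rw [← Finset.sum_union Finset.disjoint_sdiff, Finset.union_sdiff_self_eq_union]
        rw [hsplit, ← hXtight] at h1
        have h2 : ∑ i ∈ Y, w i ≤ ∑ j ∈ NXs r R Y \ NXs r R X, w j := by linarith
        calc ∑ i ∈ Y, w' i = ∑ i ∈ Y, w i := Finset.sum_congr rfl fun i hi => hwL i (hYL hi)
          _ ≤ ∑ j ∈ NXs r R Y \ NXs r R X, w j := h2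
          _ = ∑ j ∈ NXs r R Y, w' j := by
              rw [Finset.sdiff_eq_filter, Finset.sum_filter]
              refine Finset.sum_congr rfl fun j _ => ?_
              by_cases hj : j ∈ NXs r R X <;> simp [hw'def, hj]
      have hmeas2 : meas r (L \ X) R w' ≤ n := by
        have hlt : (L \ X).card < L.card :=
          Finset.card_lt_card (Finset.sdiff_ssubset hXL hXne)
        have := meas_lt_of_card_lt (r := r) (L := L) (L' := L \ X) (R := R) (R' := R)
          (w := w) (w' := w') hlt
        omega
      obtain ⟨y2, h20, h2supp, h2sat, h2cap⟩ := ih (L \ X) R w' hmeas2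
        (hdisj.mono_left Finset.sdiff_subset) hw' hall2
      have h2van' : ∀ i, i ∉ L \ X → ∀ j, y2 i j = 0 := by
        intro i hi j
        by_contra h
        exact hi (h2supp i j h).1
      refine ⟨fun i j => y1 i j + y2 i j, fun i j => add_nonneg (h10 i j) (h20 i j),
        ?_, ?_, ?_⟩
      · intro i j h
        by_cases h1 : y1 i j = 0
        · have h' : y1 i j + y2 i j ≠ 0 := h
          have h2 : y2 i j ≠ 0 := by intro h2; rw [h1, h2] at h'; simp at h'
          obtain ⟨hi, hj, hr⟩ := h2supp i j h2
          exact ⟨Finset.sdiff_subset hi, hj, hr⟩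
        · obtain ⟨hi, hj, hr⟩ := h1supp i j h1
          exact ⟨hXL hi, hj, hr⟩
      · intro i hi
        rw [Finset.sum_add_distrib]
        by_cases hiX : i ∈ X
        · have : ∑ j, y2 i j = 0 :=
            Finset.sum_eq_zero fun j _ => h2van' i (by simp [hiX]) j
          rw [this, h1sat i hiX, add_zero]
        · have h0 : ∑ j, y1 i j = 0 := Finset.sum_eq_zero fun j _ => h1van' i hiX j
          have hmem : i ∈ L \ X := Finset.mem_sdiff.mpr ⟨hi, hiX⟩
          rw [h0, h2sat i hmem, zero_add]
          exact hwL i hi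
      · intro j
        rw [Finset.sum_add_distrib]
        by_cases hjN : j ∈ NXs r R X
        · have e2 : ∑ i, y2 i j ≤ 0 := by
            have := h2cap j
            simpa [hw'def, hjN] using this
          have := h1tight j hjN
          linarith
        · have e1 : ∑ i, y1 i j = 0 := Finset.sum_eq_zero fun i _ => h1van i j hjN
          have := h2cap j
          rw [e1, zero_add]
          simpa [hw'def, hjN] using this
    · push_neg at hzero
      obtain ⟨i0, hi0L⟩ := Finset.nonempty_iff_ne_empty.mpr hL
      have hi0pos : 0 < w i0 := lt_of_le_of_ne (hw i0) (Ne.symm (hzero i0 hi0L))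
      have h1 : w i0 ≤ ∑ j ∈ NXs r R {i0}, w j := by
        have := hall {i0} (Finset.singleton_subset_iff.mpr hi0L)
        simpa using this
      have hj0ex : ∃ j0 ∈ NXs r R {i0}, w j0 ≠ 0 := by
        by_contra hcon
        push_neg at hcon
        have hz : ∑ j ∈ NXs r R {i0}, w j = 0 := Finset.sum_eq_zero hcon
        rw [hz] at h1; linarith
      obtain ⟨j0, hj0N, hj0ne⟩ := hj0ex
      have hj0R : j0 ∈ R := (Finset.mem_filter.mp hj0N).1
      have hrij : r i0 j0 := by
        obtain ⟨-, i, hi, hr⟩ := Finset.mem_filter.mp hj0N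
        rwa [Finset.mem_singleton.mp hi] at hr
      have hj0pos : 0 < w j0 := lt_of_le_of_ne (hw j0) (Ne.symm hj0ne)
      have hne : i0 ≠ j0 := fun h => (Finset.disjoint_left.mp hdisj hi0L) (h ▸ hj0R)
      set 𝒳 := ((L.erase i0).powerset.filter
        (fun X => X.Nonempty ∧ j0 ∈ NXs r R X)) with h𝒳
      set surp : Finset V → ℝ := fun X => (∑ j ∈ NXs r R X, w j) - ∑ i ∈ X, w i with hsurp
      have hXprop : ∀ X ∈ 𝒳, 0 < surp X := by
        intro X hX
        simp only [h𝒳, Finset.mem_filter, Finset.mem_powerset] at hX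
        obtain ⟨hXe, hXne, hXj0⟩ := hX
        have hXL' : X ⊆ L := hXe.trans (Finset.erase_subset _ _)
        have hXnotL : X ≠ L := by
          intro h
          subst h
          exact (Finset.notMem_erase i0 X) (hXe hi0L)
        have hle := hall X hXL'
        have hneq : ∑ i ∈ X, w i ≠ ∑ j ∈ NXs r R X, w j := fun h =>
          htight ⟨X, hXL', hXne, hXnotL, h⟩
        simp only [hsurp]
        have := lt_of_le_of_ne hle hneq
        linarith
      set sm : ℝ := if h : 𝒳.Nonempty then 𝒳.inf' h surp else w i0 with hsm
      have hspos : 0 < sm := by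
        rw [hsm]
        split
        · rename_i hh
          exact (Finset.lt_inf'_iff hh).mpr hXprop
        · exact hi0pos
      set δ := min (w i0) (min (w j0) sm) with hδ
      have hδpos : 0 < δ := lt_min hi0pos (lt_min hj0pos hspos)
      have hδi0 : δ ≤ w i0 := min_le_left _ _
      have hδj0 : δ ≤ w j0 := (min_le_right _ _).trans (min_le_left _ _)
      have hδs : δ ≤ sm := (min_le_right _ _).trans (min_le_right _ _)
      set w' : V → ℝ := fun v => if v = i0 then w i0 - δ
        else if v = j0 then w j0 - δ else w v with hw'def
      have hw'i0 : w' i0 = w i0 - δ := by simp [hw'def]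
      have hw'j0 : w' j0 = w j0 - δ := by
        simp only [hw'def]
        rw [if_neg (fun h => hne h.symm)]
        simp
      have hw'other : ∀ v, v ≠ i0 → v ≠ j0 → w' v = w v := by
        intro v h1 h2; simp [hw'def, h1, h2]
      have hw'0 : ∀ v, 0 ≤ w' v := by
        intro v
        by_cases h1 : v = i0
        · subst h1; rw [hw'i0]; linarith
        · by_cases h2 : v = j0
          · subst h2; rw [hw'j0]; linarith
          · rw [hw'other v h1 h2]; exact hw v
      have hsum2 : ∀ T : Finset V, ∑ v ∈ T, w' v
          = ∑ v ∈ T, w v + ((if i0 ∈ T then -δ else 0) + (if j0 ∈ T then -δ else 0)) := by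
        intro T
        have hcong : ∀ v ∈ T, w' v
            = w v + ((if v = i0 then -δ else 0) + (if v = j0 then -δ else 0)) := by
          intro v _
          by_cases h1 : v = i0
          · subst h1
            rw [hw'i0, if_pos rfl, if_neg hne]
            ring
          · by_cases h2 : v = j0
            · subst h2
              rw [hw'j0, if_neg (fun h => hne h.symm), if_pos rfl]
              ring
            · rw [hw'other v h1 h2, if_neg h1, if_neg h2]
              ring
        rw [Finset.sum_congr rfl hcong, Finset.sum_add_distrib, Finset.sum_add_distrib,
          Finset.sum_ite_eq' T i0 (fun _ => -δ), Finset.sum_ite_eq' T j0 (fun _ => -δ)]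
      have hall' : ∀ X ⊆ L, ∑ i ∈ X, w' i ≤ ∑ j ∈ NXs r R X, w' j := by
        intro X hXL'
        have hj0X : j0 ∉ X := fun h => (Finset.disjoint_left.mp hdisj (hXL' h)) hj0R
        have hi0N : i0 ∉ NXs r R X := fun h =>
          (Finset.disjoint_left.mp hdisj hi0L) (Finset.mem_filter.mp h).1
        by_cases hi0X : i0 ∈ X
        · have hj0N' : j0 ∈ NXs r R X := Finset.mem_filter.mpr ⟨hj0R, i0, hi0X, hrij⟩
          rw [hsum2 X, hsum2 (NXs r R X), if_pos hi0X, if_neg hj0X, if_neg hi0N,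
            if_pos hj0N']
          have := hall X hXL'
          linarith
        · by_cases hj0N' : j0 ∈ NXs r R X
          · have hXne2 : X.Nonempty := by
              rcases Finset.eq_empty_or_nonempty X with h | h
              · subst h
                simp [NXs] at hj0N'
              · exact h
            have hX𝒳 : X ∈ 𝒳 := by
              simp only [h𝒳, Finset.mem_filter, Finset.mem_powerset]
              exact ⟨fun v hv => Finset.mem_erase.mpr
                ⟨fun h => hi0X (h ▸ hv), hXL' hv⟩, hXne2, hj0N'⟩
            have hsle : sm ≤ surp X := by
              rw [hsm, dif_pos ⟨X, hX𝒳⟩]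
              exact Finset.inf'_le _ hX𝒳
            rw [hsum2 X, hsum2 (NXs r R X), if_neg hi0X, if_neg hj0X, if_neg hi0N,
              if_pos hj0N']
            simp only [hsurp] at hsle
            linarith
          · rw [hsum2 X, hsum2 (NXs r R X), if_neg hi0X, if_neg hj0X, if_neg hi0N,
              if_neg hj0N']
            have := hall X hXL'
            linarith
      have hmeas' : meas r L R w' ≤ n := by
        by_cases hcase : δ = w i0 ∨ δ = w j0
        · have hsubset : univ.filter (fun v : V => w' v ≠ 0)
              ⊆ univ.filter (fun v : V => w v ≠ 0) := by
            intro v hv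
            rw [Finset.mem_filter] at hv ⊢
            refine ⟨Finset.mem_univ v, fun hwv => hv.2 ?_⟩
            have h1 : v ≠ i0 := fun h => by
              rw [← h, hwv] at hi0pos; exact lt_irrefl 0 hi0pos
            have h2 : v ≠ j0 := fun h => by
              rw [← h, hwv] at hj0pos; exact lt_irrefl 0 hj0pos
            rw [hw'other v h1 h2]; exact hwv
          have hssub : univ.filter (fun v : V => w' v ≠ 0)
              ⊂ univ.filter (fun v : V => w v ≠ 0) := by
            refine ⟨hsubset, fun hsup => ?_⟩
            rcases hcase with h | h
            · have hmem : i0 ∈ univ.filter (fun v : V => w v ≠ 0) := by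
                simp [ne_of_gt hi0pos]
              have := hsup hmem
              rw [Finset.mem_filter] at this
              exact this.2 (by rw [hw'i0, h]; ring)
            · have hmem : j0 ∈ univ.filter (fun v : V => w v ≠ 0) := by
                simp [ne_of_gt hj0pos]
              have := hsup hmem
              rw [Finset.mem_filter] at this
              exact this.2 (by rw [hw'j0, h]; ring)
          have hcnt : cnt w' < cnt w := Finset.card_lt_card hssub
          have ht1 := tflag_le r L R w'
          unfold meas at hm ⊢
          omega
        · push_neg at hcase
          have hδlti : δ < w i0 := lt_of_le_of_ne hδi0 hcase.1
          have hδltj : δ < w j0 := lt_of_le_of_ne hδj0 hcase.2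
          have hδeq : δ = sm := by
            rcases min_choice (w i0) (min (w j0) sm) with h | h
            · rw [← hδ] at h; exact absurd h hcase.1
            · rw [← hδ] at h
              rcases min_choice (w j0) sm with h2 | h2
              · rw [h2] at h; exact absurd h hcase.2
              · rw [h2] at h; exact h
          have h𝒳ne : 𝒳.Nonempty := by
            by_contra hcon
            have : sm = w i0 := by rw [hsm, dif_neg hcon]
            rw [this] at hδeq
            exact hcase.1 hδeq
          obtain ⟨X0, hX0mem, hX0inf⟩ := Finset.exists_mem_eq_inf' h𝒳ne surp
          have hX0s : surp X0 = δ := by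
            rw [hδeq, hsm, dif_pos h𝒳ne, hX0inf]
          simp only [h𝒳, Finset.mem_filter, Finset.mem_powerset] at hX0mem
          obtain ⟨hX0e, hX0ne, hX0j0⟩ := hX0mem
          have hX0L : X0 ⊆ L := hX0e.trans (Finset.erase_subset _ _)
          have hi0X0 : i0 ∉ X0 := fun h => (Finset.notMem_erase i0 L) (hX0e h)
          have hj0X0 : j0 ∉ X0 := fun h => (Finset.disjoint_left.mp hdisj (hX0L h)) hj0R
          have hi0N0 : i0 ∉ NXs r R X0 := fun h =>
            (Finset.disjoint_left.mp hdisj hi0L) (Finset.mem_filter.mp h).1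
          have hX0notL : X0 ≠ L := fun h => hi0X0 (h ▸ hi0L)
          have htight' : ∑ i ∈ X0, w' i = ∑ j ∈ NXs r R X0, w' j := by
            rw [hsum2 X0, hsum2 (NXs r R X0), if_neg hi0X0, if_neg hj0X0, if_neg hi0N0,
              if_pos hX0j0]
            simp only [hsurp] at hX0s
            linarith
          have ht' : tflag r L R w' = 0 := by
            unfold tflag
            rw [if_pos ⟨X0, hX0L, hX0ne, hX0notL, htight'⟩]
          have ht : tflag r L R w = 1 := by
            unfold tflag
            rw [if_neg htight]
          have hcnt : cnt w' = cnt w := by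
            unfold cnt
            congr 1
            apply Finset.filter_congr
            intro v _
            by_cases h1 : v = i0
            · subst h1
              rw [hw'i0]
              constructor
              · intro _; exact ne_of_gt hi0pos
              · intro _ hc; rw [sub_eq_zero] at hc; exact hcase.1 hc.symm
            · by_cases h2 : v = j0
              · subst h2
                rw [hw'j0]
                constructor
                · intro _; exact ne_of_gt hj0pos
                · intro _ hc; rw [sub_eq_zero] at hc; exact hcase.2 hc.symm
              · rw [hw'other v h1 h2]
          unfold meas at hm ⊢
          omega
      obtain ⟨y', hy0, hysupp, hysat, hycap⟩ := ih L R w' hmeas' hdisj hw'0 hall'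
      refine ⟨fun i j => y' i j + (if i = i0 ∧ j = j0 then δ else 0), ?_, ?_, ?_, ?_⟩
      · intro i j
        have : (0:ℝ) ≤ (if i = i0 ∧ j = j0 then δ else 0) := by
          split
          · linarith
          · exact le_refl 0
        have := add_nonneg (hy0 i j) this
        simpa using this
      · intro i j h
        by_cases hij : i = i0 ∧ j = j0
        · obtain ⟨h1, h2⟩ := hij
          subst h1; subst h2
          exact ⟨hi0L, hj0R, hrij⟩
        · have h' : y' i j ≠ 0 := by
            intro hz
            apply h
            simp only [hz, if_neg hij, add_zero]
          exact hysupp i j h'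
      · intro i hi
        have hsat := hysat i hi
        rw [Finset.sum_add_distrib, hsat]
        by_cases hii : i = i0
        · have he : ∑ j, (if i = i0 ∧ j = j0 then δ else 0) = δ := by
            simp [hii]
          rw [he, hii, hw'i0]
          ring
        · have he : ∑ j, (if i = i0 ∧ j = j0 then δ else 0) = 0 := by
            apply Finset.sum_eq_zero
            intro j _
            rw [if_neg (fun hc => hii hc.1)]
          have hij0 : i ≠ j0 := fun h => (Finset.disjoint_left.mp hdisj hi) (h ▸ hj0R)
          rw [he, hw'other i hii hij0, add_zero]
      · intro j
        rw [Finset.sum_add_distrib]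
        by_cases hjj : j = j0
        · have he : ∑ i, (if i = i0 ∧ j = j0 then δ else 0) = δ := by
            simp [hjj]
          rw [he, hjj]
          have hc := hycap j0
          rw [hw'j0] at hc
          linarith
        · have he : ∑ i, (if i = i0 ∧ j = j0 then δ else 0) = 0 := by
            apply Finset.sum_eq_zero
            intro i _
            rw [if_neg (fun hc => hjj hc.2)]
          rw [he, add_zero]
          have := hycap j
          have hwj : w' j ≤ w j := by
            by_cases h1 : j = i0
            · subst h1; rw [hw'i0]; linarith
            · rw [hw'other j h1 hjj]
          linarith

lemma fracHall (r : V → V → Prop) (L R : Finset V) (w : V → ℝ)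
    (hdisj : Disjoint L R) (hw : ∀ v, 0 ≤ w v)
    (hall : ∀ X ⊆ L, ∑ i ∈ X, w i ≤ ∑ j ∈ NXs r R X, w j) :
    ∃ y : V → V → ℝ, FHout r L R w y :=
  fracHallAux r (meas r L R w) L R w (le_refl _) hdisj hw hall

end FracHall

section StableSet

open FracHall

variable {V : Type*} [Fintype V] [DecidableEq V]

open scoped Classical

lemma exists_max_stable (G : SimpleGraph V) (w : V → ℝ) :
    ∃ S : Finset V, (∀ i ∈ S, ∀ j ∈ S, ¬ G.Adj i j) ∧ alphaW G w = ∑ i ∈ S, w i ∧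
      (∀ S' : Finset V, (∀ i ∈ S', ∀ j ∈ S', ¬ G.Adj i j) →
        ∑ i ∈ S', w i ≤ alphaW G w) := by
  classical
  set 𝒮 : Finset (Finset V) := univ.filter (fun S => ∀ i ∈ S, ∀ j ∈ S, ¬ G.Adj i j) with h𝒮
  set vals : Finset ℝ := 𝒮.image (fun S => ∑ i ∈ S, w i) with hvals
  have hne : vals.Nonempty := by
    refine ⟨∑ i ∈ (∅ : Finset V), w i, Finset.mem_image.mpr ⟨∅, ?_, rfl⟩⟩
    simp [h𝒮]
  have hset : {v : ℝ | ∃ S : Finset V, (∀ i ∈ S, ∀ j ∈ S, ¬ G.Adj i j) ∧ v = ∑ i ∈ S, w i}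
      = ↑vals := by
    ext v
    simp only [Set.mem_setOf_eq, hvals, Finset.coe_image, Set.mem_image, Finset.mem_coe,
      h𝒮, Finset.mem_filter, Finset.mem_univ, true_and]
    constructor
    · rintro ⟨S, hS, rfl⟩
      exact ⟨S, hS, rfl⟩
    · rintro ⟨S, hS, rfl⟩
      exact ⟨S, hS, rfl⟩
  have halpha : alphaW G w = vals.max' hne := by
    rw [alphaW, hset]
    exact hne.csSup_eq_max'
  obtain ⟨S, hSmem, hSval⟩ := Finset.mem_image.mp (vals.max'_mem hne)
  have hSstable : ∀ i ∈ S, ∀ j ∈ S, ¬ G.Adj i j := by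
    rw [h𝒮] at hSmem
    exact (Finset.mem_filter.mp hSmem).2
  refine ⟨S, hSstable, by rw [halpha, hSval], ?_⟩
  intro S' hS'
  rw [halpha]
  apply Finset.le_max'
  exact Finset.mem_image.mpr ⟨S', by
    simp only [h𝒮, Finset.mem_filter, Finset.mem_univ, true_and]
    exact hS', rfl⟩

lemma exists_koenig (G : SimpleGraph V) (hbip : G.Colorable 2) (w : V → ℝ)
    (hw : ∀ v, 0 ≤ w v) :
    ∃ Y : V → V → ℝ, (∀ i j, 0 ≤ Y i j) ∧ (∀ i j, Y i j = Y j i) ∧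
      (∀ i j, Y i j ≠ 0 → G.Adj i j) ∧ (∀ i, ∑ j, Y i j ≤ w i) ∧
      (∑ i, (w i - ∑ j, Y i j)) + (∑ i, ∑ j, Y i j) / 2 = alphaW G w := by
  classical
  obtain ⟨S, hSstable, hSval, hSmax⟩ := exists_max_stable G w
  obtain ⟨col⟩ := hbip
  set T : Finset V := univ \ S with hT
  set L : Fin 2 → Finset V := fun c => T.filter (fun v => col v = c) with hL
  set R : Fin 2 → Finset V := fun c => S.filter (fun v => col v ≠ c) with hR
  have hdisj : ∀ c, Disjoint (L c) (R c) := by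
    intro c
    apply Finset.disjoint_of_subset_left (Finset.filter_subset _ _)
    apply Finset.disjoint_of_subset_right (Finset.filter_subset _ _)
    rw [hT]
    exact Finset.sdiff_disjoint
  have hhall : ∀ c, ∀ X ⊆ L c, ∑ i ∈ X, w i ≤ ∑ j ∈ NXs G.Adj (R c) X, w j := by
    intro c X hXL
    set D : Finset V := NXs G.Adj (R c) X with hD
    have hDS : D ⊆ S := fun j hj => Finset.mem_of_mem_filter _
      ((Finset.mem_filter.mp hj).1 : j ∈ R c)
    have hXT : X ⊆ T := fun v hv => Finset.mem_of_mem_filter _ (hXL hv)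
    have hXS : Disjoint X S := Finset.disjoint_of_subset_left hXT
      (hT ▸ Finset.sdiff_disjoint)
    have hXcol : ∀ v ∈ X, col v = c := fun v hv => (Finset.mem_filter.mp (hXL hv)).2
    set S' : Finset V := (S \ D) ∪ X with hS'
    have hstab : ∀ i ∈ S', ∀ j ∈ S', ¬ G.Adj i j := by
      intro a ha b hb hadj
      rw [hS', Finset.mem_union] at ha hb
      rcases ha with ha | ha <;> rcases hb with hb | hb
      · exact hSstable a (Finset.mem_sdiff.mp ha).1 b (Finset.mem_sdiff.mp hb).1 hadj
      · obtain ⟨haS, haD⟩ := Finset.mem_sdiff.mp ha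
        apply haD
        rw [hD]
        refine Finset.mem_filter.mpr ⟨?_, b, hb, hadj.symm⟩
        refine Finset.mem_filter.mpr ⟨haS, ?_⟩
        rw [← hXcol b hb]
        exact (col.valid hadj)
      · obtain ⟨hbS, hbD⟩ := Finset.mem_sdiff.mp hb
        apply hbD
        rw [hD]
        refine Finset.mem_filter.mpr ⟨?_, a, ha, hadj⟩
        refine Finset.mem_filter.mpr ⟨hbS, ?_⟩
        rw [← hXcol a ha]
        exact (col.valid hadj.symm)
      · have h1 := hXcol a ha
        have h2 := hXcol b hb
        exact (col.valid hadj) (h1.trans h2.symm)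
    have hval := hSmax S' hstab
    have hsum : ∑ i ∈ S', w i = (∑ i ∈ S, w i - ∑ j ∈ D, w j) + ∑ i ∈ X, w i := by
      rw [hS', Finset.sum_union]
      · rw [Finset.sum_sdiff_eq_sub hDS]
      · exact Finset.disjoint_of_subset_left Finset.sdiff_subset hXS.symm
    rw [hsum, ← hSval] at hval
    linarith
  obtain ⟨y0, hy00, hy0supp, hy0sat, hy0cap⟩ := fracHall G.Adj (L 0) (R 0) w (hdisj 0) hw (hhall 0)
  obtain ⟨y1, hy10, hy1supp, hy1sat, hy1cap⟩ := fracHall G.Adj (L 1) (R 1) w (hdisj 1) hw (hhall 1)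
  have hLT : ∀ c v, v ∈ L c → v ∈ T := fun c v hv => Finset.mem_of_mem_filter _ hv
  have hRS : ∀ c v, v ∈ R c → v ∈ S := fun c v hv => Finset.mem_of_mem_filter _ hv
  have hTS : ∀ v, v ∈ T → v ∉ S := fun v hv => (Finset.mem_sdiff.mp (hT ▸ hv)).2
  have hST : ∀ v, v ∈ S → v ∉ T := fun v hv hvT => hTS v hvT hv
  have hTuniv : ∀ v, v ∉ S → v ∈ T := fun v hv => hT ▸ Finset.mem_sdiff.mpr ⟨Finset.mem_univ v, hv⟩
  set Y : V → V → ℝ := fun i j => y0 i j + y0 j i + y1 i j + y1 j i with hY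
  have hY0 : ∀ i j, 0 ≤ Y i j := fun i j => by
    have := hy00 i j; have := hy00 j i; have := hy10 i j; have := hy10 j i
    simp only [hY]; linarith
  have hYsym : ∀ i j, Y i j = Y j i := fun i j => by simp only [hY]; ring
  have hYsupp : ∀ i j, Y i j ≠ 0 → G.Adj i j := by
    intro i j h
    simp only [hY] at h
    by_cases h0 : y0 i j = 0
    · by_cases h1 : y0 j i = 0
      · by_cases h2 : y1 i j = 0
        · have h3 : y1 j i ≠ 0 := fun hc => h (by rw [h0, h1, h2, hc]; ring)
          exact ((hy1supp j i h3).2.2).symm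
        · exact (hy1supp i j h2).2.2
      · exact ((hy0supp j i h1).2.2).symm
    · exact (hy0supp i j h0).2.2
  -- vanishing lemmas
  have hv0L : ∀ i, i ∉ L 0 → ∀ j, y0 i j = 0 := fun i hi j => by
    by_contra h; exact hi (hy0supp i j h).1
  have hv1L : ∀ i, i ∉ L 1 → ∀ j, y1 i j = 0 := fun i hi j => by
    by_contra h; exact hi (hy1supp i j h).1
  have hv0R : ∀ j, j ∉ R 0 → ∀ i, y0 i j = 0 := fun j hj i => by
    by_contra h; exact hj (hy0supp i j h).2.1
  have hv1R : ∀ j, j ∉ R 1 → ∀ i, y1 i j = 0 := fun j hj i => by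
    by_contra h; exact hj (hy1supp i j h).2.1
  have hfin2 : ∀ x : Fin 2, x = 0 ∨ x = 1 := by decide
  -- row sums on T
  have hrowT : ∀ i ∈ T, ∑ j, Y i j = w i := by
    intro i hiT
    have hiS : i ∉ S := hTS i hiT
    have hR0 : i ∉ R 0 := fun h => hiS (hRS 0 i h)
    have hR1 : i ∉ R 1 := fun h => hiS (hRS 1 i h)
    have hsplit : ∑ j, Y i j = (∑ j, y0 i j) + (∑ j, y0 j i) + (∑ j, y1 i j) + (∑ j, y1 j i) := by
      simp only [hY]
      rw [← Finset.sum_add_distrib, ← Finset.sum_add_distrib, ← Finset.sum_add_distrib]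
    have e2 : ∑ j, y0 j i = 0 := Finset.sum_eq_zero fun j _ => hv0R i hR0 j
    have e4 : ∑ j, y1 j i = 0 := Finset.sum_eq_zero fun j _ => hv1R i hR1 j
    rcases hfin2 (col i) with hc | hc
    · have hiL0 : i ∈ L 0 := Finset.mem_filter.mpr ⟨hiT, hc⟩
      have hiL1 : i ∉ L 1 := fun h => by
        have := (Finset.mem_filter.mp h).2
        rw [hc] at this
        exact absurd this (by decide)
      have e3 : ∑ j, y1 i j = 0 := Finset.sum_eq_zero fun j _ => hv1L i hiL1 j
      rw [hsplit, e2, e3, e4, hy0sat i hiL0]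
      ring
    · have hiL1 : i ∈ L 1 := Finset.mem_filter.mpr ⟨hiT, hc⟩
      have hiL0 : i ∉ L 0 := fun h => by
        have := (Finset.mem_filter.mp h).2
        rw [hc] at this
        exact absurd this (by decide)
      have e1 : ∑ j, y0 i j = 0 := Finset.sum_eq_zero fun j _ => hv0L i hiL0 j
      rw [hsplit, e1, e2, e4, hy1sat i hiL1]
      ring
  -- row sums on S
  have hrowS : ∀ i ∈ S, ∑ j, Y i j ≤ w i := by
    intro i hiS
    have hiT : i ∉ T := hST i hiS
    have hL0 : i ∉ L 0 := fun h => hiT (hLT 0 i h)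
    have hL1 : i ∉ L 1 := fun h => hiT (hLT 1 i h)
    have hsplit : ∑ j, Y i j = (∑ j, y0 i j) + (∑ j, y0 j i) + (∑ j, y1 i j) + (∑ j, y1 j i) := by
      simp only [hY]
      rw [← Finset.sum_add_distrib, ← Finset.sum_add_distrib, ← Finset.sum_add_distrib]
    have e1 : ∑ j, y0 i j = 0 := Finset.sum_eq_zero fun j _ => hv0L i hL0 j
    have e3 : ∑ j, y1 i j = 0 := Finset.sum_eq_zero fun j _ => hv1L i hL1 j
    rcases hfin2 (col i) with hc | hc
    · have hiR1 : i ∈ R 1 := Finset.mem_filter.mpr ⟨hiS, by rw [hc]; decide⟩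
      have hiR0 : i ∉ R 0 := fun h => by
        have := (Finset.mem_filter.mp h).2
        rw [hc] at this
        exact this rfl
      have e2 : ∑ j, y0 j i = 0 := Finset.sum_eq_zero fun j _ => hv0R i hiR0 j
      rw [hsplit, e1, e2, e3]
      have := hy1cap i
      linarith
    · have hiR0 : i ∈ R 0 := Finset.mem_filter.mpr ⟨hiS, by rw [hc]; decide⟩
      have hiR1 : i ∉ R 1 := fun h => by
        have := (Finset.mem_filter.mp h).2
        rw [hc] at this
        exact this rfl
      have e4 : ∑ j, y1 j i = 0 := Finset.sum_eq_zero fun j _ => hv1R i hiR1 j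
      rw [hsplit, e1, e3, e4]
      have := hy0cap i
      linarith
  have hrow : ∀ i, ∑ j, Y i j ≤ w i := by
    intro i
    by_cases hiS : i ∈ S
    · exact hrowS i hiS
    · exact le_of_eq (hrowT i (hTuniv i hiS))
  refine ⟨Y, hY0, hYsym, hYsupp, hrow, ?_⟩
  -- the key value identity
  have hUS : (univ : Finset V) = S ∪ T := by
    rw [hT, Finset.union_sdiff_self_eq_union]
    simp
  have hdisjST : Disjoint S T := Finset.disjoint_left.mpr hST
  set F : ℝ := ∑ i, ∑ j, (y0 i j + y1 i j) with hF
  have hA : ∑ i ∈ S, ∑ j, Y i j = F := by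
    have step1 : ∀ i ∈ S, ∑ j, Y i j = ∑ j, (y0 j i + y1 j i) := by
      intro i hiS
      have hiT : i ∉ T := hST i hiS
      apply Finset.sum_congr rfl
      intro j _
      simp only [hY]
      rw [hv0L i (fun h => hiT (hLT 0 i h)) j, hv1L i (fun h => hiT (hLT 1 i h)) j]
      ring
    rw [Finset.sum_congr rfl step1]
    have step2 : ∑ i ∈ S, ∑ j, (y0 j i + y1 j i) = ∑ i, ∑ j, (y0 j i + y1 j i) := by
      apply Finset.sum_subset (Finset.subset_univ _)
      intro i _ hiS
      apply Finset.sum_eq_zero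
      intro j _
      rw [hv0R i (fun h => hiS (hRS 0 i h)) j, hv1R i (fun h => hiS (hRS 1 i h)) j]
      ring
    rw [step2, hF, Finset.sum_comm]
  have hB : ∑ i ∈ T, ∑ j, Y i j = F := by
    have step1 : ∀ i ∈ T, ∑ j, Y i j = ∑ j, (y0 i j + y1 i j) := by
      intro i hiT
      have hiS : i ∉ S := hTS i hiT
      apply Finset.sum_congr rfl
      intro j _
      simp only [hY]
      rw [hv0R i (fun h => hiS (hRS 0 i h)) j, hv1R i (fun h => hiS (hRS 1 i h)) j]
      ring
    rw [Finset.sum_congr rfl step1]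
    apply Finset.sum_subset (Finset.subset_univ _)
    intro i _ hiT
    apply Finset.sum_eq_zero
    intro j _
    rw [hv0L i (fun h => hiT (hLT 0 i h)) j, hv1L i (fun h => hiT (hLT 1 i h)) j]
    ring
  have hsplitU : ∀ f : V → ℝ, ∑ i, f i = ∑ i ∈ S, f i + ∑ i ∈ T, f i := by
    intro f
    rw [hUS, Finset.sum_union hdisjST]
  have hz : ∑ i, (w i - ∑ j, Y i j) = ∑ i ∈ S, (w i - ∑ j, Y i j) := by
    rw [hsplitU (fun i => w i - ∑ j, Y i j)]
    have hzero : ∑ i ∈ T, (w i - ∑ j, Y i j) = 0 :=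
      Finset.sum_eq_zero fun i hi => by rw [hrowT i hi]; ring
    rw [hzero, add_zero]
  have hSz : ∑ i ∈ S, (w i - ∑ j, Y i j) = ∑ i ∈ S, w i - F := by
    rw [Finset.sum_sub_distrib, hA]
  have hYF : ∑ i, ∑ j, Y i j = F + F := by
    rw [hsplitU (fun i => ∑ j, Y i j), hA, hB]
  rw [hz, hSz, hYF, hSval]
  ring

end StableSet


section PolyPart

variable {V : Type*} [Fintype V] [DecidableEq V]


variable {V : Type*} [Fintype V] [DecidableEq V]

lemma collapse {M : Type*} [AddCommMonoid M] (𝒯 : Finset (Finset V)) {T0 I0 : Finset V}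
    (hT : T0 ∈ 𝒯) (hI : I0 ∈ T0.powerset) (f : Finset V → Finset V → M) :
    (∑ T ∈ 𝒯, ∑ I ∈ T.powerset, if T0 = T ∧ I0 = I then f T I else 0) = f T0 I0 := by
  rw [Finset.sum_eq_single T0]
  · rw [Finset.sum_eq_single I0]
    · rw [if_pos ⟨rfl, rfl⟩]
    · intro I _ hne
      rw [if_neg (fun h => hne h.2.symm)]
    · intro h; exact absurd hI h
  · intro T _ hne
    exact Finset.sum_eq_zero fun I _ => if_neg (fun h => hne h.1.symm)
  · intro h; exact absurd hT h

lemma master (𝒯 : Finset (Finset V)) {κ : Type*} [Fintype κ] (Tk Ik : κ → Finset V)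
    (coef : κ → ℝ) (hmem : ∀ k, Tk k ∈ 𝒯) (hsub : ∀ k, Ik k ∈ (Tk k).powerset) :
    (∑ T ∈ 𝒯, ∑ I ∈ T.powerset,
        C (∑ k : κ, if Tk k = T ∧ Ik k = I then coef k else 0) * handTerm T I)
      = ∑ k : κ, C (coef k) * handTerm (Tk k) (Ik k) := by
  have e1 : ∀ T ∈ 𝒯, ∀ I ∈ T.powerset,
      C (∑ k : κ, if Tk k = T ∧ Ik k = I then coef k else 0) * handTerm T I
      = ∑ k : κ, (if Tk k = T ∧ Ik k = I then C (coef k) * handTerm T I else 0) := by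
    intro T _ I _
    rw [map_sum, Finset.sum_mul]
    apply Finset.sum_congr rfl
    intro k _
    by_cases h : Tk k = T ∧ Ik k = I
    · rw [if_pos h, if_pos h]
    · rw [if_neg h, if_neg h, map_zero, zero_mul]
  calc (∑ T ∈ 𝒯, ∑ I ∈ T.powerset,
        C (∑ k : κ, if Tk k = T ∧ Ik k = I then coef k else 0) * handTerm T I)
      = ∑ T ∈ 𝒯, ∑ I ∈ T.powerset, ∑ k : κ,
          (if Tk k = T ∧ Ik k = I then C (coef k) * handTerm T I else 0) :=
        Finset.sum_congr rfl fun T hT => Finset.sum_congr rfl fun I hI => e1 T hT I hI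
    _ = ∑ T ∈ 𝒯, ∑ k : κ, ∑ I ∈ T.powerset,
          (if Tk k = T ∧ Ik k = I then C (coef k) * handTerm T I else 0) :=
        Finset.sum_congr rfl fun T _ => Finset.sum_comm
    _ = ∑ k : κ, ∑ T ∈ 𝒯, ∑ I ∈ T.powerset,
          (if Tk k = T ∧ Ik k = I then C (coef k) * handTerm T I else 0) := Finset.sum_comm
    _ = ∑ k : κ, C (coef k) * handTerm (Tk k) (Ik k) := by
        apply Finset.sum_congr rfl
        intro k _
        exact collapse 𝒯 (hmem k) (hsub k) _

lemma hand_single (i : V) : handTerm ({i} : Finset V) (∅ : Finset V) = 1 - X i := by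
  simp [handTerm]

lemma hand_pair_empty {i j : V} (h : i ≠ j) :
    handTerm ({i, j} : Finset V) (∅ : Finset V) = (1 - X i) * (1 - X j) := by
  simp [handTerm, Finset.prod_pair h]

lemma hand_pair_full {i j : V} (h : i ≠ j) :
    handTerm ({i, j} : Finset V) ({i, j} : Finset V) = X i * X j := by
  simp [handTerm, Finset.prod_pair h]


end PolyPart

end Auxiliary


section MainProof

open FracHall

variable {V : Type*} [Fintype V] [DecidableEq V]

open scoped Classical

lemma main_aux (G : SimpleGraph V) (hbip : G.Colorable 2)
    (w : V → ℝ) (W : V → V → ℝ) (hw : ∀ v, 0 ≤ w v)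
    (hWs : ∀ i j, W i j = W j i)
    (hW : ∀ i j, G.Adj i j → min (w i) (w j) ≤ W i j) :
    InHandelman 2 (C (alphaW G w) - pGW G w W) := by
  obtain ⟨Y, hY0, hYsym, hYsupp, hrow, hkey⟩ := exists_koenig G hbip w hw
  have hYnonadj : ∀ i j, ¬ G.Adj i j → Y i j = 0 := fun i j h => by
    by_contra hne
    exact h (hYsupp i j hne)
  have hYW : ∀ i j, G.Adj i j → Y i j ≤ W i j := by
    intro i j hadj
    have h1 : Y i j ≤ w i :=
      le_trans (Finset.single_le_sum (fun k _ => hY0 i k) (Finset.mem_univ j)) (hrow i)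
    have h2 : Y i j ≤ w j := by
      rw [hYsym i j]
      exact le_trans (Finset.single_le_sum (fun k _ => hY0 j k) (Finset.mem_univ i)) (hrow j)
    exact le_trans (le_min h1 h2) (hW i j hadj)
  set z : V → ℝ := fun i => w i - ∑ j, Y i j with hzdef
  have hz0 : ∀ i, 0 ≤ z i := fun i => by
    have := hrow i
    simp only [hzdef]
    linarith
  set h1f : V × V → ℝ := fun q => if G.Adj q.1 q.2 then Y q.1 q.2 / 2 else 0 with h1def
  set h2f : V × V → ℝ := fun q => if G.Adj q.1 q.2 then (W q.1 q.2 - Y q.1 q.2) / 2 else 0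
    with h2def
  have h10 : ∀ q, 0 ≤ h1f q := fun q => by
    simp only [h1def]
    split
    · linarith [hY0 q.1 q.2]
    · exact le_refl 0
  have h20 : ∀ q, 0 ≤ h2f q := fun q => by
    simp only [h2def]
    split
    · rename_i h
      have := hYW q.1 q.2 h
      linarith
    · exact le_refl 0
  refine ⟨fun T I =>
      (∑ i : V, if ({i} : Finset V) = T ∧ (∅ : Finset V) = I then z i else 0)
      + (∑ q : V × V, if ({q.1, q.2} : Finset V) = T ∧ (∅ : Finset V) = I then h1f q else 0)
      + (∑ q : V × V, if ({q.1, q.2} : Finset V) = T ∧ ({q.1, q.2} : Finset V) = I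
          then h2f q else 0),
    fun T I => ?_, ?_⟩
  · have n1 : (0:ℝ) ≤ ∑ i : V, if ({i} : Finset V) = T ∧ (∅ : Finset V) = I then z i else 0 :=
      Finset.sum_nonneg fun i _ => by
        split
        · exact hz0 i
        · exact le_refl 0
    have n2 : (0:ℝ) ≤ ∑ q : V × V,
        if ({q.1, q.2} : Finset V) = T ∧ (∅ : Finset V) = I then h1f q else 0 :=
      Finset.sum_nonneg fun q _ => by
        split
        · exact h10 q
        · exact le_refl 0
    have n3 : (0:ℝ) ≤ ∑ q : V × V,
        if ({q.1, q.2} : Finset V) = T ∧ ({q.1, q.2} : Finset V) = I then h2f q else 0 :=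
      Finset.sum_nonneg fun q _ => by
        split
        · exact h20 q
        · exact le_refl 0
    exact add_nonneg (add_nonneg n1 n2) n3
  · -- the polynomial identity
    have hmem1 : ∀ i : V, ({i} : Finset V)
        ∈ Finset.univ.filter (fun T : Finset V => T.card ≤ 2) :=
      fun i => Finset.mem_filter.mpr ⟨Finset.mem_univ _, by simp⟩
    have hmem2 : ∀ q : V × V, ({q.1, q.2} : Finset V)
        ∈ Finset.univ.filter (fun T : Finset V => T.card ≤ 2) :=
      fun q => Finset.mem_filter.mpr ⟨Finset.mem_univ _,
        le_trans (Finset.card_insert_le _ _) (by simp)⟩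
    have hstep : (∑ T ∈ Finset.univ.filter (fun T : Finset V => T.card ≤ 2),
          ∑ I ∈ T.powerset, C ((∑ i : V, if ({i} : Finset V) = T ∧ (∅ : Finset V) = I
              then z i else 0)
            + (∑ q : V × V, if ({q.1, q.2} : Finset V) = T ∧ (∅ : Finset V) = I
              then h1f q else 0)
            + (∑ q : V × V, if ({q.1, q.2} : Finset V) = T ∧ ({q.1, q.2} : Finset V) = I
              then h2f q else 0)) * handTerm T I)
        = (∑ i : V, C (z i) * handTerm ({i} : Finset V) (∅ : Finset V))
          + (∑ q : V × V, C (h1f q) * handTerm ({q.1, q.2} : Finset V) (∅ : Finset V))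
          + (∑ q : V × V, C (h2f q) * handTerm ({q.1, q.2} : Finset V)
              ({q.1, q.2} : Finset V)) := by
      rw [← master (Finset.univ.filter (fun T : Finset V => T.card ≤ 2))
          (fun i : V => ({i} : Finset V)) (fun _ => (∅ : Finset V)) z hmem1
          (fun i => Finset.empty_mem_powerset _),
        ← master (Finset.univ.filter (fun T : Finset V => T.card ≤ 2))
          (fun q : V × V => ({q.1, q.2} : Finset V)) (fun _ => (∅ : Finset V)) h1f hmem2
          (fun q => Finset.empty_mem_powerset _),
        ← master (Finset.univ.filter (fun T : Finset V => T.card ≤ 2))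
          (fun q : V × V => ({q.1, q.2} : Finset V)) (fun q => ({q.1, q.2} : Finset V)) h2f
          hmem2 (fun q => Finset.mem_powerset_self _),
        ← Finset.sum_add_distrib, ← Finset.sum_add_distrib]
      refine Finset.sum_congr rfl fun T _ => ?_
      rw [← Finset.sum_add_distrib, ← Finset.sum_add_distrib]
      refine Finset.sum_congr rfl fun I _ => ?_
      rw [map_add, map_add, add_mul, add_mul]
    have hP1 : (∑ i : V, C (z i) * handTerm ({i} : Finset V) (∅ : Finset V))
        = (∑ i : V, (C (z i) : MvPolynomial V ℝ)) - (∑ i : V, C (z i) * X i) := by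
      rw [← Finset.sum_sub_distrib]
      refine Finset.sum_congr rfl fun i _ => ?_
      rw [hand_single]
      ring
    have hP2 : (∑ q : V × V, C (h1f q) * handTerm ({q.1, q.2} : Finset V) (∅ : Finset V))
        = (∑ q : V × V, if G.Adj q.1 q.2 then (C (Y q.1 q.2 / 2) : MvPolynomial V ℝ) else 0)
          - (∑ q : V × V, if G.Adj q.1 q.2 then C (Y q.1 q.2 / 2) * X q.1 else 0)
          - (∑ q : V × V, if G.Adj q.1 q.2 then C (Y q.1 q.2 / 2) * X q.2 else 0)
          + (∑ q : V × V, if G.Adj q.1 q.2 then C (Y q.1 q.2 / 2) * (X q.1 * X q.2) else 0) := by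
      rw [← Finset.sum_sub_distrib, ← Finset.sum_sub_distrib, ← Finset.sum_add_distrib]
      refine Finset.sum_congr rfl fun q _ => ?_
      by_cases h : G.Adj q.1 q.2
      · simp only [h1def, if_pos h]
        rw [hand_pair_empty h.ne]
        ring
      · simp only [h1def, if_neg h]
        simp
    have hP3 : (∑ q : V × V, C (h2f q) * handTerm ({q.1, q.2} : Finset V)
          ({q.1, q.2} : Finset V))
        = ∑ q : V × V, if G.Adj q.1 q.2
            then C ((W q.1 q.2 - Y q.1 q.2) / 2) * (X q.1 * X q.2) else 0 := by
      refine Finset.sum_congr rfl fun q _ => ?_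
      by_cases h : G.Adj q.1 q.2
      · simp only [h2def, if_pos h]
        rw [hand_pair_full h.ne]
      · simp only [h2def, if_neg h]
        simp
    -- identification of the constant part
    have hCsum : ∀ Z : V → V → ℝ, (∀ i j, ¬ G.Adj i j → Z i j = 0) →
        (∑ q : V × V, if G.Adj q.1 q.2 then (C (Z q.1 q.2 / 2) : MvPolynomial V ℝ) else 0)
          = C ((∑ i, ∑ j, Z i j) / 2) := by
      intro Z hZ
      have e1 : ∀ q : V × V, (if G.Adj q.1 q.2 then (C (Z q.1 q.2 / 2) : MvPolynomial V ℝ)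
          else 0) = C (Z q.1 q.2 / 2) := by
        intro q
        by_cases h : G.Adj q.1 q.2
        · rw [if_pos h]
        · rw [if_neg h, hZ q.1 q.2 h]
          simp
      rw [Finset.sum_congr rfl fun q _ => e1 q, ← map_sum, ← Finset.sum_div,
        Fintype.sum_prod_type]
    have hA1 : (∑ q : V × V, if G.Adj q.1 q.2 then (C (Y q.1 q.2 / 2) : MvPolynomial V ℝ)
        else 0) = C ((∑ i, ∑ j, Y i j) / 2) := hCsum Y hYnonadj
    have hα : (C (alphaW G w) : MvPolynomial V ℝ)
        = (∑ i : V, (C (z i) : MvPolynomial V ℝ))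
          + (∑ q : V × V, if G.Adj q.1 q.2 then (C (Y q.1 q.2 / 2) : MvPolynomial V ℝ)
              else 0) := by
      rw [hA1, ← map_sum, ← map_add, ← hkey]
    -- linear part
    have hitepull : ∀ (i : V) (p : V → MvPolynomial V ℝ),
        (∑ j : V, if G.Adj i j then C (Y i j / 2) * p i else 0)
          = C ((∑ j, Y i j) / 2) * p i := by
      intro i p
      have e1 : ∀ j : V, (if G.Adj i j then C (Y i j / 2) * p i else 0)
          = (if G.Adj i j then (C (Y i j / 2) : MvPolynomial V ℝ) else 0) * p i := by
        intro j
        by_cases h : G.Adj i j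
        · rw [if_pos h, if_pos h]
        · rw [if_neg h, if_neg h, zero_mul]
      have e2 : ∀ j : V, (if G.Adj i j then (C (Y i j / 2) : MvPolynomial V ℝ) else 0)
          = C (Y i j / 2) := by
        intro j
        by_cases h : G.Adj i j
        · rw [if_pos h]
        · rw [if_neg h, hYnonadj i j h]
          simp
      rw [Finset.sum_congr rfl fun j _ => e1 j, ← Finset.sum_mul,
        Finset.sum_congr rfl fun j _ => e2 j, ← map_sum, ← Finset.sum_div]
    have hB1 : (∑ q : V × V, if G.Adj q.1 q.2 then C (Y q.1 q.2 / 2) * X q.1 else 0)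
        = ∑ i : V, C ((∑ j, Y i j) / 2) * X i := by
      rw [Fintype.sum_prod_type]
      exact Finset.sum_congr rfl fun i _ => hitepull i (fun i => X i)
    have hB2 : (∑ q : V × V, if G.Adj q.1 q.2 then C (Y q.1 q.2 / 2) * X q.2 else 0)
        = ∑ i : V, C ((∑ j, Y i j) / 2) * X i := by
      have hswap : (∑ q : V × V, if G.Adj q.1 q.2 then C (Y q.1 q.2 / 2) * X q.2 else 0)
          = ∑ q : V × V, if G.Adj q.2 q.1 then C (Y q.2 q.1 / 2) * X q.1 else 0 :=
        Fintype.sum_equiv (Equiv.prodComm V V) _ _ (fun q => rfl)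
      rw [hswap]
      have e : ∀ q : V × V, (if G.Adj q.2 q.1 then C (Y q.2 q.1 / 2) * X q.1 else 0)
          = (if G.Adj q.1 q.2 then C (Y q.1 q.2 / 2) * X q.1 else 0) := by
        intro q
        by_cases h : G.Adj q.1 q.2
        · rw [if_pos h.symm, if_pos h, hYsym q.2 q.1]
        · rw [if_neg (fun hc => h hc.symm), if_neg h]
      rw [Finset.sum_congr rfl fun q _ => e q]
      exact hB1
    have hlin : (∑ i : V, C (w i) * X i)
        = (∑ i : V, C (z i) * X i)
          + (∑ q : V × V, if G.Adj q.1 q.2 then C (Y q.1 q.2 / 2) * X q.1 else 0)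
          + (∑ q : V × V, if G.Adj q.1 q.2 then C (Y q.1 q.2 / 2) * X q.2 else 0) := by
      rw [hB1, hB2, ← Finset.sum_add_distrib, ← Finset.sum_add_distrib]
      refine Finset.sum_congr rfl fun i _ => ?_
      rw [← add_mul, ← add_mul, ← map_add, ← map_add]
      have : z i + (∑ j, Y i j) / 2 + (∑ j, Y i j) / 2 = w i := by
        simp only [hzdef]
        ring
      rw [this]
    -- quadratic part
    have hquad : (C (2⁻¹ : ℝ) : MvPolynomial V ℝ)
          * ∑ q ∈ Finset.univ.filter (fun q : V × V => G.Adj q.1 q.2),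
            C (W q.1 q.2) * (X q.1 * X q.2)
        = (∑ q : V × V, if G.Adj q.1 q.2 then C (Y q.1 q.2 / 2) * (X q.1 * X q.2) else 0)
          + (∑ q : V × V, if G.Adj q.1 q.2
              then C ((W q.1 q.2 - Y q.1 q.2) / 2) * (X q.1 * X q.2) else 0) := by
      rw [Finset.sum_filter, Finset.mul_sum, ← Finset.sum_add_distrib]
      refine Finset.sum_congr rfl fun q _ => ?_
      by_cases h : G.Adj q.1 q.2
      · rw [if_pos h, if_pos h, if_pos h, ← add_mul, ← map_add]
        have : Y q.1 q.2 / 2 + (W q.1 q.2 - Y q.1 q.2) / 2 = 2⁻¹ * W q.1 q.2 := by ring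
        rw [this, map_mul, mul_assoc]
      · rw [if_neg h, if_neg h, if_neg h, mul_zero, add_zero]
    rw [hstep, hP1, hP2, hP3]
    rw [pGW]
    rw [hα, hlin, hquad]
    abel

end MainProof

/-- If `G` is bipartite (i.e. 2-colorable), then for any node weights
`w ≥ 0` and edge weights `w_{ij} ≥ min(w_i,w_j)`, the polynomial
`f_{G,w} = α(G,w) − p_{G,w}` belongs to `H_2`, i.e. `rk_H(G,w) ≤ 2`. -/
theorem bipartite_handelman_rank_le_two {V : Type*} [Fintype V] [DecidableEq V]
    (G : SimpleGraph V) (hbip : G.Colorable 2)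
    (w : V → ℝ) (W : V → V → ℝ) (hw : ∀ v, 0 ≤ w v)
    (hWs : ∀ i j, W i j = W j i)
    (hW : ∀ i j, G.Adj i j → min (w i) (w j) ≤ W i j) :
    InHandelman 2 (C (alphaW G w) - pGW G w W) :=
  main_aux G hbip w W hw hWs hW
end

section
/- Let p(x) = a_0 + Σ_{i∈[n]} a_i x_i + Σ_{I ⊆ [n], |I| ≥ 2} a_I x^I be a square-free polynomial and t ≥ 1 an integer. If λ − p ∈ H_t for some λ ∈ ℝ, then λ − a_0 ≥ (Σ_{i∈[n]} a_i)/t. -/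
open MvPolynomial Finset

noncomputable def toOne (n : ℕ) : MvPolynomial (Fin n) ℝ →ₐ[ℝ] Polynomial ℝ :=
  aeval (fun _ => Polynomial.X)

lemma toOne_monomial {n : ℕ} (m : Fin n →₀ ℕ) (a : ℝ) :
    toOne n (monomial m a) = Polynomial.C a * Polynomial.X ^ (m.sum fun _ e => e) := by
  rw [toOne, aeval_monomial, Finsupp.prod]
  simp [Finset.prod_pow_eq_pow_sum, Finsupp.sum, Polynomial.C_eq_algebraMap]

lemma degree_zero_eq {n : ℕ} (m : Fin n →₀ ℕ) (h : (m.sum fun _ e => e) = 0) : m = 0 := by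
  ext j
  by_contra hj
  have hjs : j ∈ m.support := Finsupp.mem_support_iff.2 (by simpa using hj)
  rw [Finsupp.sum, Finset.sum_eq_zero_iff] at h
  exact hj (by simpa using h j hjs)

lemma degree_one_eq {n : ℕ} (m : Fin n →₀ ℕ) (h : (m.sum fun _ e => e) = 1) :
    ∃ i, m = Finsupp.single i 1 := by
  have hne : m.support.Nonempty := by
    by_contra hc
    rw [Finset.not_nonempty_iff_eq_empty] at hc
    rw [Finsupp.sum, hc] at h; simp at h
  obtain ⟨i, hi⟩ := hne
  have hle : m i ≤ 1 := by
    rw [← h, Finsupp.sum]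
    exact Finset.single_le_sum (fun _ _ => Nat.zero_le _) hi
  have hone : m i = 1 := le_antisymm hle (Nat.one_le_iff_ne_zero.2 (Finsupp.mem_support_iff.1 hi))
  have hsupp : m.support = {i} := by
    apply Finset.eq_singleton_iff_unique_mem.2
    refine ⟨hi, fun j hj => ?_⟩
    by_contra hji
    have hsub : ({i, j} : Finset (Fin n)) ⊆ m.support := by
      intro x hx; simp at hx; rcases hx with rfl | rfl <;> assumption
    have h2 : m i + m j ≤ ∑ k ∈ m.support, m k := by
      have := Finset.sum_le_sum_of_subset hsub (f := m)
      rwa [Finset.sum_pair (Ne.symm hji)] at this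
    rw [Finsupp.sum] at h
    have hj1 : 1 ≤ m j := Nat.one_le_iff_ne_zero.2 (Finsupp.mem_support_iff.1 hj)
    omega
  exact ⟨i, ((Finsupp.support_eq_singleton.1 hsupp).2).trans (by rw [hone])⟩

lemma single_degree {n : ℕ} (i : Fin n) :
    ((Finsupp.single i 1 : Fin n →₀ ℕ).sum fun _ e => e) = 1 := by
  simp [Finsupp.sum_single_index]

lemma toOne_coeff_zero {n : ℕ} (p : MvPolynomial (Fin n) ℝ) :
    (toOne n p).coeff 0 = p.coeff 0 := by
  conv_lhs => rw [p.as_sum]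
  rw [map_sum, Polynomial.finset_sum_coeff]
  rw [Finset.sum_congr rfl (fun m _ => by
    rw [toOne_monomial, Polynomial.coeff_C_mul, Polynomial.coeff_X_pow])]
  have step : ∀ m ∈ p.support,
      (coeff m p * if 0 = m.sum fun _ e => e then 1 else 0)
        = if m = 0 then coeff m p else 0 := by
    intro m _
    by_cases hm : m = 0
    · subst hm; simp
    · rw [if_neg hm, if_neg (fun hc => hm (degree_zero_eq m hc.symm)), mul_zero]
  rw [Finset.sum_congr rfl step, Finset.sum_ite_eq' p.support 0 (fun m => coeff m p)]
  by_cases h0 : (0 : Fin n →₀ ℕ) ∈ p.support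
  · rw [if_pos h0]
  · rw [if_neg h0, eq_comm]
    exact MvPolynomial.notMem_support_iff.1 h0

lemma toOne_coeff_one {n : ℕ} (p : MvPolynomial (Fin n) ℝ) :
    (toOne n p).coeff 1 = ∑ i, p.coeff (Finsupp.single i 1) := by
  conv_lhs => rw [p.as_sum]
  rw [map_sum, Polynomial.finset_sum_coeff]
  rw [Finset.sum_congr rfl (fun m _ => by
    rw [toOne_monomial, Polynomial.coeff_C_mul, Polynomial.coeff_X_pow])]
  have step : ∀ m ∈ p.support,
      (coeff m p * if 1 = m.sum fun _ e => e then 1 else 0)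
        = ∑ i : Fin n, if m = Finsupp.single i 1 then coeff m p else 0 := by
    intro m _
    by_cases hm : (m.sum fun _ e => e) = 1
    · obtain ⟨i0, rfl⟩ := degree_one_eq m hm
      rw [if_pos hm.symm, mul_one]
      rw [Finset.sum_eq_single i0]
      · rw [if_pos rfl]
      · intro j _ hj
        rw [if_neg]
        intro hc
        exact hj (Finsupp.single_left_injective one_ne_zero hc).symm
      · intro hc; exact absurd (Finset.mem_univ i0) hc
    · rw [if_neg (fun hc => hm hc.symm), mul_zero, eq_comm]
      apply Finset.sum_eq_zero
      intro i _
      rw [if_neg]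
      intro hc
      exact hm (by rw [hc]; exact single_degree i)
  rw [Finset.sum_congr rfl step, Finset.sum_comm]
  apply Finset.sum_congr rfl
  intro i _
  rw [Finset.sum_ite_eq' p.support (Finsupp.single i 1) (fun m => coeff m p)]
  by_cases h0 : (Finsupp.single i 1 : Fin n →₀ ℕ) ∈ p.support
  · rw [if_pos h0]
  · rw [if_neg h0, eq_comm]
    exact MvPolynomial.notMem_support_iff.1 h0

lemma coeff_one_mul' (p q : Polynomial ℝ) :
    (p * q).coeff 1 = p.coeff 0 * q.coeff 1 + p.coeff 1 * q.coeff 0 := by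
  rw [Polynomial.coeff_mul]
  rw [show (1:ℕ) = 0 + 1 by rfl, Finset.Nat.antidiagonal_succ]
  simp [Prod.map]

lemma omX_coeff (m : ℕ) :
    ((1 - Polynomial.X : Polynomial ℝ) ^ m).coeff 0 = 1 ∧
    ((1 - Polynomial.X : Polynomial ℝ) ^ m).coeff 1 = -(m : ℝ) := by
  induction m with
  | zero => simp [Polynomial.coeff_one]
  | succ m ih =>
    rw [pow_succ]
    refine ⟨?_, ?_⟩
    · rw [Polynomial.mul_coeff_zero, ih.1]; simp
    · rw [coeff_one_mul', ih.1, ih.2]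
      simp [Polynomial.coeff_one]

lemma key_ineq (t k m : ℕ) (hkm : k + m ≤ t) :
    0 ≤ (t : ℝ) * ((Polynomial.X ^ k * (1 - Polynomial.X : Polynomial ℝ) ^ m).coeff 0)
        + (Polynomial.X ^ k * (1 - Polynomial.X : Polynomial ℝ) ^ m).coeff 1 := by
  match k with
  | 0 =>
    simp only [pow_zero, one_mul]
    rw [(omX_coeff m).1, (omX_coeff m).2]
    have : (m : ℝ) ≤ t := by exact_mod_cast le_trans (Nat.le_add_left m 0) hkm
    linarith
  | 1 =>
    rw [pow_one, Polynomial.mul_coeff_zero, coeff_one_mul']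
    simp [(omX_coeff m).1]
  | (k+2) =>
    rw [Polynomial.mul_coeff_zero, coeff_one_mul']
    simp [Polynomial.coeff_X_pow]

lemma toOne_handTerm {n : ℕ} (T I : Finset (Fin n)) :
    toOne n (handTerm T I)
      = Polynomial.X ^ I.card * (1 - Polynomial.X : Polynomial ℝ) ^ (T \ I).card := by
  rw [handTerm, map_mul, map_prod, map_prod]
  simp [toOne]

/-- If `p = a_0 + Σ_i a_i x_i + Σ_{|I|≥2} a_I x^I` is square-free and
`λ − p ∈ H_t`, then `λ − a_0 ≥ (Σ_i a_i)/t`.  Here `a_0 = p.coeff 0` and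
`a_i = p.coeff (single i 1)`. -/
theorem handelman_linear_coeff_bound {n : ℕ} (p : MvPolynomial (Fin n) ℝ)
    (hsf : ∀ m ∈ p.support, ∀ i, m i ≤ 1) (t : ℕ) (ht : 1 ≤ t) (lam : ℝ)
    (h : InHandelman t (C lam - p)) :
    (∑ i, p.coeff (Finsupp.single i 1)) / (t : ℝ) ≤ lam - p.coeff 0 := by
  obtain ⟨c, hc, heq⟩ := h
  have hpos : (0:ℝ) < t := by exact_mod_cast ht
  have hmain : 0 ≤ (t : ℝ) * ((toOne n (C lam - p)).coeff 0)
      + (toOne n (C lam - p)).coeff 1 := by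
    rw [heq, map_sum, Polynomial.finset_sum_coeff, Polynomial.finset_sum_coeff,
      Finset.mul_sum, ← Finset.sum_add_distrib]
    apply Finset.sum_nonneg
    intro T hT
    rw [map_sum, Polynomial.finset_sum_coeff, Polynomial.finset_sum_coeff,
      Finset.mul_sum, ← Finset.sum_add_distrib]
    apply Finset.sum_nonneg
    intro I hI
    have hIT : I ⊆ T := Finset.mem_powerset.1 hI
    have hcard : I.card + (T \ I).card ≤ t := by
      rw [Finset.card_sdiff_of_subset hIT, Nat.add_sub_cancel' (Finset.card_le_card hIT)]
      exact (Finset.mem_filter.1 hT).2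
    rw [map_mul, show toOne n (C (c T I)) = Polynomial.C (c T I) by simp [toOne],
      toOne_handTerm, Polynomial.coeff_C_mul, Polynomial.coeff_C_mul]
    have := key_ineq t I.card (T \ I).card hcard
    have hcn := hc T I
    nlinarith
  rw [toOne_coeff_zero, toOne_coeff_one] at hmain
  have h0 : (C lam - p).coeff 0 = lam - p.coeff 0 := by
    simp
  have h1 : ∀ i : Fin n, (C lam - p).coeff (Finsupp.single i 1)
      = - p.coeff (Finsupp.single i 1) := by
    intro i
    rw [MvPolynomial.coeff_sub, MvPolynomial.coeff_C,
      if_neg (fun hc => one_ne_zero (Finsupp.single_eq_zero.1 hc.symm))]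
    ring
  rw [h0, Finset.sum_congr rfl (fun i _ => h1 i), Finset.sum_neg_distrib] at hmain
  rw [div_le_iff₀ hpos]
  nlinarith
end

section
/- Let G = (V,E) be a finite simple graph on n nodes with node weights w ∈ ℝ_+^V and edge weights satisfying w_{ij} ≥ min{w_i, w_j} for all edges ij ∈ E. Then for every integer t ≥ 1, the Handelman bound satisfies p_han^{(t)}(G,w) ≥ (Σ_{i=1}^n w_i)/t, and consequently the Handelman rank satisfies rk_H(G,w) ≥ (Σ_{i=1}^n w_i)/α(G,w). -/
/-!
For `s ≥ 0` the linear functional `L_s(p) = p(0) + s · Σᵢ ∂ᵢp(0)` takes the value `1 - s|T|`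
on a Handelman generator `x^I (1 - x)^(T ∖ I)` with `I = ∅`, the value `s` when `|I| = 1`, and `0`
otherwise; so it is nonnegative on `H_t` as soon as `s t ≤ 1`. The edge terms of `p_{G,w}` vanish to
second order at `0`, hence `L_s(p_{G,w}) = s Σᵢ wᵢ`, and `λ - p_{G,w} ∈ H_t` forces `λ ≥ s Σᵢ wᵢ`.
Taking `s = 1/t` gives `t λ ≥ Σᵢ wᵢ` (for `t = 0`, letting `s → ∞` gives `Σᵢ wᵢ ≤ 0`); both claims
follow, the second with `λ = α(G,w) ≥ 0`.
-/

open MvPolynomial Finset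

theorem le_mul_of_forall_mul_le {a b t : ℝ} (ht : 0 ≤ t)
    (h : ∀ s, 0 ≤ s → s * t ≤ 1 → s * a ≤ b) : a ≤ t * b := by
  rcases ht.lt_or_eq with ht | rfl
  · have := h t⁻¹ (inv_nonneg.mpr ht.le) (inv_mul_cancel₀ ht.ne').le
    rwa [inv_mul_le_iff₀ ht] at this
  · rw [zero_mul]
    by_contra! ha
    have := h ((|b| + 1) / a) (by positivity) (by simp)
    rw [div_mul_cancel₀ _ ha.ne'] at this
    linarith [le_abs_self b]

namespace Handelman

variable {V : Type*}

/- `L_s` of the header, computed on the diagonal restriction `x ↦ p(x, …, x)`, whose derivative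
at `0` is `Σᵢ ∂ᵢp(0)`. -/
noncomputable def diagFunctional (s : ℝ) : MvPolynomial V ℝ →ₗ[ℝ] ℝ :=
  (Polynomial.leval 0 + s • Polynomial.leval 0 ∘ₗ Polynomial.derivative) ∘ₗ
    (aeval fun _ : V => (Polynomial.X : Polynomial ℝ)).toLinearMap

theorem diagFunctional_apply (s : ℝ) (p : MvPolynomial V ℝ) :
    diagFunctional s p =
      (aeval (fun _ : V => Polynomial.X) p).eval 0 +
        s * (Polynomial.derivative (aeval (fun _ : V => Polynomial.X) p)).eval 0 :=
  rfl

@[simp]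
theorem diagFunctional_C (s a : ℝ) : diagFunctional (V := V) s (C a) = a := by
  simp [diagFunctional_apply]

theorem eval_zero_add_mul_derivative_nonneg {s : ℝ} (hs : 0 ≤ s) (a : ℕ) {b : ℕ}
    (hb : s * b ≤ 1) :
    0 ≤ ((Polynomial.X : Polynomial ℝ) ^ a * (1 - Polynomial.X) ^ b).eval 0 +
      s * (Polynomial.derivative
        ((Polynomial.X : Polynomial ℝ) ^ a * (1 - Polynomial.X) ^ b)).eval 0 := by
  rw [Polynomial.derivative_mul, Polynomial.derivative_X_pow, Polynomial.derivative_pow]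
  match a with
  | 0 => simp; linarith
  | 1 => simpa using hs
  | n + 2 => simp

theorem diagFunctional_handTerm_nonneg [DecidableEq V] {s : ℝ} (hs : 0 ≤ s)
    (T I : Finset V) (hT : s * T.card ≤ 1) : 0 ≤ diagFunctional s (handTerm T I) := by
  have hdiag : aeval (fun _ : V => (Polynomial.X : Polynomial ℝ)) (handTerm T I) =
      Polynomial.X ^ I.card * (1 - Polynomial.X) ^ (T \ I).card := by
    simp [handTerm, map_prod]
  have hcard : ((T \ I).card : ℝ) ≤ T.card := by
    exact_mod_cast Finset.card_le_card Finset.sdiff_subset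
  rw [diagFunctional_apply, hdiag]
  exact eval_zero_add_mul_derivative_nonneg hs _ ((mul_le_mul_of_nonneg_left hcard hs).trans hT)

theorem diagFunctional_nonneg_of_inHandelman [Fintype V] [DecidableEq V] {s : ℝ} (hs : 0 ≤ s)
    {t : ℕ} (hst : s * t ≤ 1) {p : MvPolynomial V ℝ} (hp : InHandelman t p) :
    0 ≤ diagFunctional s p := by
  obtain ⟨c, hc, rfl⟩ := hp
  simp only [map_sum, C_mul', map_smul, smul_eq_mul]
  refine Finset.sum_nonneg fun T hT => Finset.sum_nonneg fun I _ => mul_nonneg (hc T I) ?_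
  have hTt : (T.card : ℝ) ≤ t := by exact_mod_cast (Finset.mem_filter.mp hT).2
  exact diagFunctional_handTerm_nonneg hs T I ((mul_le_mul_of_nonneg_left hTt hs).trans hst)

theorem diagFunctional_pGW [Fintype V] (G : SimpleGraph V) (w : V → ℝ) (W : V → V → ℝ)
    (s : ℝ) : diagFunctional s (pGW G w W) = s * ∑ i, w i := by
  simp [diagFunctional_apply, pGW, Polynomial.eval_finsetSum, Finset.mul_sum]

theorem sum_le_mul_of_inHandelman [Fintype V] [DecidableEq V] (G : SimpleGraph V) (w : V → ℝ)
    (W : V → V → ℝ) {t : ℕ} {lam : ℝ} (h : InHandelman t (C lam - pGW G w W)) :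
    ∑ i, w i ≤ t * lam := by
  have hbound : ∀ s : ℝ, 0 ≤ s → s * t ≤ 1 → s * ∑ i, w i ≤ lam := fun s hs hst => by
    have := diagFunctional_nonneg_of_inHandelman hs hst h
    rwa [map_sub, diagFunctional_pGW, diagFunctional_C, sub_nonneg] at this
  exact le_mul_of_forall_mul_le (Nat.cast_nonneg t) hbound

end Handelman

theorem alphaW_nonneg {V : Type*} [Finite V] (G : SimpleGraph V) (w : V → ℝ) :
    0 ≤ alphaW G w := by
  refine le_csSup ((Set.finite_range fun S : Finset V => ∑ i ∈ S, w i).bddAbove.mono ?_)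
    ⟨∅, by simp⟩
  rintro _ ⟨S, -, rfl⟩
  exact ⟨S, rfl⟩

theorem handelman_rank_lower_bound_general {V : Type*} [Fintype V] [DecidableEq V]
    (G : SimpleGraph V) (w : V → ℝ) (W : V → V → ℝ) :
    (∀ t : ℕ, 1 ≤ t → ∀ lam : ℝ, InHandelman t (C lam - pGW G w W) →
      (∑ i, w i) / (t : ℝ) ≤ lam) ∧
    (∀ t : ℕ, InHandelman t (C (alphaW G w) - pGW G w W) →
      (∑ i, w i) / alphaW G w ≤ (t : ℝ)) := by
  refine ⟨fun t ht lam h => ?_, fun t h => ?_⟩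
  · rw [div_le_iff₀' (by exact_mod_cast ht)]
    exact Handelman.sum_le_mul_of_inHandelman G w W h
  · exact div_le_of_le_mul₀ (alphaW_nonneg G w) t.cast_nonneg
      (Handelman.sum_le_mul_of_inHandelman G w W h)

/-- For node weights `w ≥ 0` and edge weights `w_{ij} ≥ min(w_i,w_j)`:
for every `t ≥ 1` the Handelman bound satisfies `p_han^{(t)}(G,w) ≥ (Σ_i w_i)/t`
(i.e. every feasible `λ` with `λ − p_{G,w} ∈ H_t` satisfies `λ ≥ (Σ_i w_i)/t`), and
consequently the Handelman rank satisfies `rk_H(G,w) ≥ (Σ_i w_i)/α(G,w)`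
(i.e. every `t` with `f_{G,w} ∈ H_t` satisfies `t ≥ (Σ_i w_i)/α(G,w)`). -/
theorem handelman_rank_lower_bound {V : Type*} [Fintype V] [DecidableEq V]
    (G : SimpleGraph V) (w : V → ℝ) (W : V → V → ℝ) (hw : ∀ v, 0 ≤ w v)
    (hWs : ∀ i j, W i j = W j i)
    (hW : ∀ i j, G.Adj i j → min (w i) (w j) ≤ W i j) :
    (∀ t : ℕ, 1 ≤ t → ∀ lam : ℝ, InHandelman t (C lam - pGW G w W) →
      (∑ i, w i) / (t : ℝ) ≤ lam) ∧
    (∀ t : ℕ, InHandelman t (C (alphaW G w) - pGW G w W) →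
      (∑ i, w i) / alphaW G w ≤ (t : ℝ)) :=
  handelman_rank_lower_bound_general G w W
end
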